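/- arXiv:2006.16824 — 9 statements merged into one kernel-verified Lean document; each statement's English description precedes it below -/
import Mathlib

section
/- Fix 1 ≤ p < ∞ and d ≥ 1. Let X₀ and Y₀ be nonempty finite subsets of ℝ^d and let ε > 0. Then there exist nonempty finite subsets X₁ and Y₁ of ℝ^d with |X₁| = |Y₁| such that: d_p^H(X₀, X₁) < ε; d_p^H(Y₀, Y₁) < ε; |d_p^H(X₀, Y₀) − W_p(X₁, Y₁)| < ε; and all pairwise Euclidean distances between distinct points of X₁ are pairwise distinct, and likewise all pairwise distances between distinct points of Y₁ are pairwise distinct. -/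
noncomputable section

variable {E : Type*} [NormedAddCommGroup E]

/-- `C` is a correspondence between the finite point sets `X` and `Y`: a set of pairs from
`X × Y` whose projections onto `X` and onto `Y` are both surjective. -/
def IsCorrespondence (X Y : Finset E) (C : Finset (E × E)) : Prop :=
  (∀ c ∈ C, c.1 ∈ X ∧ c.2 ∈ Y) ∧
  (∀ x ∈ X, ∃ y, (x, y) ∈ C) ∧
  (∀ y ∈ Y, ∃ x, (x, y) ∈ C)

/-- The `p`-Hausdorff distance between two finite point sets: the infimum over
correspondences `C` of `(∑_{(x,y) ∈ C} ‖x − y‖^p)^{1/p}`. -/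
def pHausdorffDist (p : ℝ) (X Y : Finset E) : ℝ :=
  sInf {r : ℝ | ∃ C : Finset (E × E), IsCorrespondence X Y C ∧
    r = (∑ c ∈ C, dist c.1 c.2 ^ p) ^ (1 / p)}

/-- The `p`-Wasserstein distance between two finite point sets of the same cardinality:
the infimum over bijections `M : X → Y` of `(∑_{x ∈ X} ‖x − M x‖^p)^{1/p}`. -/
def pointSetWasserstein (p : ℝ) (X Y : Finset E) : ℝ :=
  sInf {r : ℝ | ∃ M : {x // x ∈ X} ≃ {y // y ∈ Y},
    r = (∑ x ∈ X.attach, dist (x : E) ((M x : E)) ^ p) ^ (1 / p)}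

/-- All pairwise distances between distinct points of `X` are pairwise distinct: two
unordered pairs of distinct points realising the same distance must coincide. -/
def PairwiseDistancesDistinct (X : Finset E) : Prop :=
  ∀ x₁ ∈ X, ∀ x₂ ∈ X, ∀ x₃ ∈ X, ∀ x₄ ∈ X,
    x₁ ≠ x₂ → x₃ ≠ x₄ → dist x₁ x₂ = dist x₃ x₄ → ({x₁, x₂} : Set E) = {x₃, x₄}

/-!
Take a correspondence between `X₀` and `Y₀` of nearly optimal cost and list its pairs as two
families `u, v : Fin n → ℝ^d`. Moving the points of `u` and of `v` by less than `δ`, one at a time,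
gives injective families `f, g` whose images have pairwise distinct distances: each new point only
has to avoid finitely many perpendicular bisectors and spheres, a Lebesgue-null set. The sets
`X₁ = range f` and `Y₁ = range g` have `n` points each. Measured by the `ℓ^p` distance of families,
the matching `f i ↦ g i` bounds `W_p(X₁, Y₁)` from above by about the cost of the correspondence,
and every matching `f i ↦ g (σ i)` pulls back to the correspondence `{(u i, v (σ i))}` between
`X₀` and `Y₀`, which bounds it from below by about `d_p^H(X₀, Y₀)`.
-/

open Finset Function

section LpDist

variable {ι : Type*} [Fintype ι]

def lpDist (p : ℝ) (u v : ι → E) : ℝ :=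
  (∑ i, dist (u i) (v i) ^ p) ^ (1 / p)

lemma lpDist_nonneg (p : ℝ) (u v : ι → E) : 0 ≤ lpDist p u v := by
  unfold lpDist; positivity

lemma lpDist_comm (p : ℝ) (u v : ι → E) : lpDist p u v = lpDist p v u := by
  simp only [lpDist, dist_comm]

lemma lpDist_comp_equiv (p : ℝ) (u v : ι → E) (σ : ι ≃ ι) :
    lpDist p (u ∘ σ) (v ∘ σ) = lpDist p u v :=
  congrArg (· ^ (1 / p)) (σ.sum_comp fun i => dist (u i) (v i) ^ p)

lemma lpDist_triangle {p : ℝ} (hp : 1 ≤ p) (u v w : ι → E) :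
    lpDist p u w ≤ lpDist p u v + lpDist p v w := by
  calc lpDist p u w ≤ (∑ i, (dist (u i) (v i) + dist (v i) (w i)) ^ p) ^ (1 / p) := by
        unfold lpDist
        gcongr with i
        exact dist_triangle _ _ _
    _ ≤ lpDist p u v + lpDist p v w :=
        Real.Lp_add_le_of_nonneg univ hp (fun _ _ => dist_nonneg) (fun _ _ => dist_nonneg)

lemma lpDist_le_of_dist_le {p : ℝ} (hp : 0 < p) {u v : ι → E} {δ : ℝ} (hδ : 0 ≤ δ)
    (h : ∀ i, dist (u i) (v i) ≤ δ) : lpDist p u v ≤ (Fintype.card ι : ℝ) ^ (1 / p) * δ := by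
  calc lpDist p u v ≤ (∑ _i : ι, δ ^ p) ^ (1 / p) := by
        unfold lpDist
        gcongr with i
        exact h i
    _ = (Fintype.card ι : ℝ) ^ (1 / p) * δ := by
        rw [sum_const, card_univ, nsmul_eq_mul, Real.mul_rpow (by positivity) (by positivity),
          ← Real.rpow_mul hδ, mul_one_div_cancel hp.ne', Real.rpow_one]

lemma exists_pos_forall_dist_lt_lpDist_lt {p : ℝ} (hp : 0 < p) {η : ℝ} (hη : 0 < η) :
    ∃ δ > 0, ∀ u v : ι → E, (∀ i, dist (u i) (v i) < δ) → lpDist p u v < η := by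
  set K : ℝ := (Fintype.card ι : ℝ) ^ (1 / p)
  refine ⟨η / (K + 1), by positivity, fun u v h => ?_⟩
  calc lpDist p u v ≤ K * (η / (K + 1)) :=
        lpDist_le_of_dist_le hp (by positivity) fun i => (h i).le
    _ < η := by
        rw [mul_div_assoc', div_lt_iff₀ (by positivity)]
        nlinarith

end LpDist

section EquivImage

variable {α ι : Type*} [DecidableEq α] [Fintype ι] {u : ι → α}

def equivImageUniv (hu : Injective u) : ι ≃ {x // x ∈ univ.image u} :=
  (Equiv.ofInjective u hu).trans (Equiv.subtypeEquivRight fun x => by simp)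

@[simp] lemma coe_equivImageUniv_apply (hu : Injective u) (i : ι) :
    (equivImageUniv hu i : α) = u i := rfl

lemma apply_equivImageUniv_symm_apply (hu : Injective u) (x : {x // x ∈ univ.image u}) :
    u ((equivImageUniv hu).symm x) = x := by
  rw [← coe_equivImageUniv_apply hu, Equiv.apply_symm_apply]

end EquivImage

section Families

variable [DecidableEq E] {ι : Type*} [Fintype ι]

lemma pHausdorffDist_image_le_lpDist {p : ℝ} (hp : 0 ≤ p) (u v : ι → E) :
    pHausdorffDist p (univ.image u) (univ.image v) ≤ lpDist p u v := by
  have hC : IsCorrespondence (univ.image u) (univ.image v) (univ.image fun i => (u i, v i)) := by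
    refine ⟨?_, ?_, ?_⟩ <;> simp
  calc pHausdorffDist p (univ.image u) (univ.image v)
      ≤ (∑ c ∈ univ.image fun i => (u i, v i), dist c.1 c.2 ^ p) ^ (1 / p) := by
        refine csInf_le ⟨0, ?_⟩ ⟨_, hC, rfl⟩
        rintro r ⟨C, -, rfl⟩
        positivity
    _ ≤ lpDist p u v := by
        unfold lpDist
        gcongr
        exact sum_image_le_of_nonneg fun _ _ => by positivity

lemma exists_lpDist_lt_pHausdorffDist_add (p : ℝ) {X Y : Finset E} (hX : X.Nonempty)
    (hY : Y.Nonempty) {θ : ℝ} (hθ : 0 < θ) :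
    ∃ (n : ℕ) (u v : Fin n → E), univ.image u = X ∧ univ.image v = Y ∧
      lpDist p u v < pHausdorffDist p X Y + θ := by
  have hX_Y : IsCorrespondence X Y (X ×ˢ Y) := by
    refine ⟨fun c hc => mem_product.mp hc, fun x hx => ?_, fun y hy => ?_⟩
    · exact ⟨_, mem_product.mpr ⟨hx, hY.choose_spec⟩⟩
    · exact ⟨_, mem_product.mpr ⟨hX.choose_spec, hy⟩⟩
  obtain ⟨_, ⟨C, ⟨hCXY, hCX, hCY⟩, rfl⟩, hlt⟩ :=
    exists_lt_of_csInf_lt (by exact ⟨_, X ×ˢ Y, hX_Y, rfl⟩)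
      (lt_add_of_pos_right (pHausdorffDist p X Y) hθ)
  set e := C.equivFin.symm
  refine ⟨C.card, fun i => (e i).1.1, fun i => (e i).1.2, ?_, ?_, ?_⟩
  · ext x
    simp only [mem_image, mem_univ, true_and]
    exact ⟨fun ⟨i, hi⟩ => hi ▸ (hCXY _ (e i).2).1,
      fun hx => ⟨e.symm ⟨_, (hCX x hx).choose_spec⟩, by simp⟩⟩
  · ext y
    simp only [mem_image, mem_univ, true_and]
    exact ⟨fun ⟨i, hi⟩ => hi ▸ (hCXY _ (e i).2).2,
      fun hy => ⟨e.symm ⟨_, (hCY y hy).choose_spec⟩, by simp⟩⟩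
  · refine Eq.trans_lt ?_ hlt
    unfold lpDist
    rw [← sum_coe_sort C]
    exact congrArg (· ^ (1 / p)) (e.sum_comp fun c => dist c.1.1 c.1.2 ^ p)

lemma pointSetWasserstein_image_eq_iInf (p : ℝ) {u v : ι → E} (hu : Injective u)
    (hv : Injective v) :
    pointSetWasserstein p (univ.image u) (univ.image v) =
      ⨅ σ : Equiv.Perm ι, lpDist p u (v ∘ σ) := by
  set eu := equivImageUniv hu
  set ev := equivImageUniv hv
  have cost_eq : ∀ M : {x // x ∈ univ.image u} ≃ {y // y ∈ univ.image v},
      (∑ x ∈ (univ.image u).attach, dist (x : E) (M x : E) ^ p) ^ (1 / p) =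
        lpDist p u (v ∘ (eu.trans (M.trans ev.symm))) := by
    intro M
    rw [← univ_eq_attach, ← eu.sum_comp]
    simp [lpDist, eu, ev, apply_equivImageUniv_symm_apply]
  refine congrArg sInf (Set.ext fun r => ⟨?_, ?_⟩)
  · rintro ⟨M, rfl⟩
    exact ⟨_, (cost_eq M).symm⟩
  · rintro ⟨σ, rfl⟩
    refine ⟨eu.symm.trans (σ.trans ev), ?_⟩
    rw [cost_eq]
    congr
    ext i
    simp

lemma pointSetWasserstein_image_le_lpDist {p : ℝ} {f g : ι → E} (hf : Injective f)
    (hg : Injective g) :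
    pointSetWasserstein p (univ.image f) (univ.image g) ≤ lpDist p f g := by
  rw [pointSetWasserstein_image_eq_iInf p hf hg]
  exact ciInf_le ⟨0, by rintro _ ⟨σ, rfl⟩; exact lpDist_nonneg _ _ _⟩ (1 : Equiv.Perm ι)

lemma pointSetWasserstein_image_le_lpDist_add {p : ℝ} (hp : 1 ≤ p) (u v : ι → E) {f g : ι → E}
    (hf : Injective f) (hg : Injective g) :
    pointSetWasserstein p (univ.image f) (univ.image g) ≤
      lpDist p u v + lpDist p u f + lpDist p v g := by
  have h_tri₁ := lpDist_triangle hp f u g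
  have h_tri₂ := lpDist_triangle hp u v g
  rw [lpDist_comm p f u] at h_tri₁
  linarith [pointSetWasserstein_image_le_lpDist (p := p) hf hg]

lemma pHausdorffDist_image_le_pointSetWasserstein_add {p : ℝ} (hp : 1 ≤ p) (u v : ι → E)
    {f g : ι → E} (hf : Injective f) (hg : Injective g) :
    pHausdorffDist p (univ.image u) (univ.image v) ≤
      pointSetWasserstein p (univ.image f) (univ.image g) + lpDist p u f + lpDist p v g := by
  rw [pointSetWasserstein_image_eq_iInf p hf hg]
  suffices h : ∀ σ : Equiv.Perm ι, pHausdorffDist p (univ.image u) (univ.image v) -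
      lpDist p u f - lpDist p v g ≤ lpDist p f (g ∘ σ) by
    linarith [le_ciInf h]
  intro σ
  have h_image : univ.image (v ∘ σ) = univ.image v := by
    classical
    rw [← image_image, image_univ_equiv]
  have h_tail : lpDist p (g ∘ σ) (v ∘ σ) = lpDist p v g := by
    rw [lpDist_comp_equiv, lpDist_comm]
  have h_dist := h_image ▸ pHausdorffDist_image_le_lpDist (zero_le_one.trans hp) u (v ∘ σ)
  have h_tri₁ := lpDist_triangle hp u f (v ∘ σ)
  have h_tri₂ := lpDist_triangle hp f (g ∘ σ) (v ∘ σ)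
  linarith

end Families

section Generic

open MeasureTheory Metric Filter

lemma ae_dist_ne_dist [InnerProductSpace ℝ E] [FiniteDimensional ℝ E] [MeasurableSpace E]
    [BorelSpace E] (μ : Measure E) [μ.IsAddHaarMeasure] {a c : E} (hac : a ≠ c) :
    ∀ᵐ z ∂μ, dist z a ≠ dist z c := by
  refine ae_iff.2 (measure_mono_null (fun z hz => ?_)
    (Measure.addHaar_affineSubspace μ _ (mt AffineSubspace.perpBisector_eq_top.1 hac)))
  exact AffineSubspace.mem_perpBisector_iff_dist_eq.2 (not_not.1 hz)

lemma ae_dist_ne [NormedSpace ℝ E] [Nontrivial E] [FiniteDimensional ℝ E] [MeasurableSpace E]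
    [BorelSpace E] (μ : Measure E) [μ.IsAddHaarMeasure] (a : E) (r : ℝ) : ∀ᵐ z ∂μ, dist z a ≠ r :=
  ae_iff.2 (by simpa [sphere] using Measure.addHaar_sphere μ a r)

lemma exists_mem_ball_dist_ne [InnerProductSpace ℝ E] [FiniteDimensional ℝ E] [Nontrivial E]
    (X : Finset E) (b : E) {δ : ℝ} (hδ : 0 < δ) :
    ∃ z ∈ ball b δ, (∀ a ∈ X, ∀ c ∈ X, dist z a = dist z c → a = c) ∧
      ∀ a ∈ X, ∀ x ∈ X, ∀ y ∈ X, dist z a ≠ dist x y := by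
  borelize E
  let μ : Measure E := Measure.addHaar
  have h_inj : ∀ᵐ z ∂μ, ∀ a ∈ X, ∀ c ∈ X, dist z a = dist z c → a = c := by
    simp only [eventually_all_finset]
    intro a _ c _
    by_cases hac : a = c
    · exact .of_forall fun _ _ => hac
    · filter_upwards [ae_dist_ne_dist μ hac] with z hz h using absurd h hz
  have h_ne : ∀ᵐ z ∂μ, ∀ a ∈ X, ∀ x ∈ X, ∀ y ∈ X, dist z a ≠ dist x y := by
    simp only [eventually_all_finset]
    exact fun a _ x _ y _ => ae_dist_ne μ a _
  have : (ae (μ.restrict (ball b δ))).NeBot :=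
    ae_neBot.2 (by simpa using (measure_ball_pos μ b hδ).ne')
  exact ((ae_restrict_mem measurableSet_ball).and (ae_restrict_of_ae (h_inj.and h_ne))).exists

end Generic

section Perturbation

variable [DecidableEq E]

lemma mem_and_mem_or_pair_eq_of_mem_insert {z u v : E} {X : Finset E} (hu : u ∈ insert z X)
    (hv : v ∈ insert z X) (huv : u ≠ v) :
    (u ∈ X ∧ v ∈ X) ∨ ∃ a ∈ X, dist u v = dist z a ∧ ({u, v} : Set E) = {z, a} := by
  rcases mem_insert.1 hu with rfl | huX <;> rcases mem_insert.1 hv with rfl | hvX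
  · exact absurd rfl huv
  · exact .inr ⟨v, hvX, rfl, rfl⟩
  · exact .inr ⟨u, huX, dist_comm _ _, Set.pair_comm _ _⟩
  · exact .inl ⟨huX, hvX⟩

lemma PairwiseDistancesDistinct.insert {X : Finset E} (hX : PairwiseDistancesDistinct X) {z : E}
    (h_inj : ∀ a ∈ X, ∀ c ∈ X, dist z a = dist z c → a = c)
    (h_ne : ∀ a ∈ X, ∀ x ∈ X, ∀ y ∈ X, dist z a ≠ dist x y) :
    PairwiseDistancesDistinct (insert z X) := by
  intro x₁ h₁ x₂ h₂ x₃ h₃ x₄ h₄ h₁₂ h₃₄ hd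
  rcases mem_and_mem_or_pair_eq_of_mem_insert h₁ h₂ h₁₂ with ⟨h₁, h₂⟩ | ⟨a, ha, hda, hsa⟩ <;>
    rcases mem_and_mem_or_pair_eq_of_mem_insert h₃ h₄ h₃₄ with ⟨h₃, h₄⟩ | ⟨c, hc, hdc, hsc⟩
  · exact hX x₁ h₁ x₂ h₂ x₃ h₃ x₄ h₄ h₁₂ h₃₄ hd
  · exact absurd (hdc.symm.trans hd.symm) (h_ne c hc x₁ h₁ x₂ h₂)
  · exact absurd (hda.symm.trans hd) (h_ne a ha x₃ h₃ x₄ h₄)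
  · rw [hsa, hsc, h_inj a ha c hc (hda.symm.trans (hd.trans hdc))]

lemma univ_image_cons {α : Type*} [DecidableEq α] {n : ℕ} (z : α) (f : Fin n → α) :
    univ.image (Fin.cons z f : Fin (n + 1) → α) = insert z (univ.image f) := by
  ext; simp [Fin.exists_fin_succ, eq_comm]

lemma exists_injective_perturbation_pairwiseDistancesDistinct
    [InnerProductSpace ℝ E] [FiniteDimensional ℝ E] [Nontrivial E] {n : ℕ} (b : Fin n → E)
    {δ : ℝ} (hδ : 0 < δ) :
    ∃ f : Fin n → E, Injective f ∧ (∀ i, dist (b i) (f i) < δ) ∧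
      PairwiseDistancesDistinct (univ.image f) := by
  induction n with
  | zero => exact ⟨b, injective_of_subsingleton _, finZeroElim, by simp [PairwiseDistancesDistinct]⟩
  | succ n ih =>
    obtain ⟨f, hf_inj, hf_close, hf_pdd⟩ := ih (Fin.tail b)
    obtain ⟨z, hz_ball, hz_inj, hz_ne⟩ := exists_mem_ball_dist_ne (univ.image f) (b 0) hδ
    have hz_notMem : z ∉ Set.range f := by
      rintro ⟨i, rfl⟩
      have hi : f i ∈ univ.image f := mem_image_of_mem f (mem_univ i)
      exact hz_ne _ hi _ hi _ hi rfl
    refine ⟨Fin.cons z f, Fin.cons_injective_iff.2 ⟨hz_notMem, hf_inj⟩,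
      Fin.forall_fin_succ.2 ⟨by simpa [dist_comm] using hz_ball, hf_close⟩, ?_⟩
    rw [univ_image_cons]
    exact hf_pdd.insert hz_inj hz_ne

end Perturbation

/-- For `1 ≤ p < ∞`, `d ≥ 1`, nonempty finite `X₀, Y₀ ⊆ ℝ^d` and `ε > 0`,
there are nonempty finite sets `X₁, Y₁ ⊆ ℝ^d` of equal cardinality with
`d_p^H(X₀,X₁) < ε`, `d_p^H(Y₀,Y₁) < ε`, `|d_p^H(X₀,Y₀) − W_p(X₁,Y₁)| < ε`, and all
pairwise distances within `X₁` distinct and all pairwise distances within `Y₁` distinct. -/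
theorem exists_generic_approximation
    (p : ℝ) (hp : 1 ≤ p) (d : ℕ) (hd : 1 ≤ d)
    (X₀ Y₀ : Finset (EuclideanSpace ℝ (Fin d)))
    (hX₀ : X₀.Nonempty) (hY₀ : Y₀.Nonempty)
    (ε : ℝ) (hε : 0 < ε) :
    ∃ X₁ Y₁ : Finset (EuclideanSpace ℝ (Fin d)),
      X₁.Nonempty ∧ Y₁.Nonempty ∧ X₁.card = Y₁.card ∧
      pHausdorffDist p X₀ X₁ < ε ∧
      pHausdorffDist p Y₀ Y₁ < ε ∧
      |pHausdorffDist p X₀ Y₀ - pointSetWasserstein p X₁ Y₁| < ε ∧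
      PairwiseDistancesDistinct X₁ ∧ PairwiseDistancesDistinct Y₁ := by
  classical
  have hp₀ : 0 < p := by linarith
  have : Nonempty (Fin d) := ⟨⟨0, hd⟩⟩
  obtain ⟨n, u, v, rfl, rfl, huv⟩ :=
    exists_lpDist_lt_pHausdorffDist_add p hX₀ hY₀ (by positivity : 0 < ε / 4)
  have : Nonempty (Fin n) := univ_nonempty_iff.1 (image_nonempty.1 hX₀)
  obtain ⟨δ, hδ, h_lpDist⟩ := exists_pos_forall_dist_lt_lpDist_lt (ι := Fin n)
    (E := EuclideanSpace ℝ (Fin d)) hp₀ (by positivity : 0 < ε / 4)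
  obtain ⟨f, hf, huf, hf_pdd⟩ := exists_injective_perturbation_pairwiseDistancesDistinct u hδ
  obtain ⟨g, hg, hvg, hg_pdd⟩ := exists_injective_perturbation_pairwiseDistancesDistinct v hδ
  have huf_lpDist := h_lpDist u f huf
  have hvg_lpDist := h_lpDist v g hvg
  have h_upper := pointSetWasserstein_image_le_lpDist_add hp u v hf hg
  have h_lower := pHausdorffDist_image_le_pointSetWasserstein_add hp u v hf hg
  refine ⟨univ.image f, univ.image g, univ_nonempty.image f, univ_nonempty.image g,
    by rw [card_image_of_injective _ hf, card_image_of_injective _ hg], ?_, ?_,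
    abs_sub_lt_iff.2 ⟨by linarith, by linarith⟩, hf_pdd, hg_pdd⟩
  · linarith [pHausdorffDist_image_le_lpDist hp₀.le u f]
  · linarith [pHausdorffDist_image_le_lpDist hp₀.le v g]
end
end

section
/- Let B be a real Banach space and let f : {(x,y) ∈ ℝ² : x ≤ y} → B be a function that vanishes on the diagonal {(t,t)} and is not identically zero. Define the linear representation Φ on persistence diagrams by Φ(X) = ∑_{x ∈ X} f(x). Then for p ∈ [1,∞] and C > 0, Φ is Lipschitz with constant C with respect to W_p (i.e., ‖Φ(X) − Φ(Y)‖_B ≤ C·W_p(X,Y) for all persistence diagrams X, Y) if and only if p = 1 and f is Lipschitz with constant C with respect to the ℓ¹ metric on ℝ². -/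
open scoped ENNReal

noncomputable section

/-- The ℓ^p norm on ℝ², for `p ∈ [1, ∞]`. -/
def lpNorm2 (p : ℝ≥0∞) (z : ℝ × ℝ) : ℝ :=
  if p = ∞ then max |z.1| |z.2|
  else (|z.1| ^ p.toReal + |z.2| ^ p.toReal) ^ (1 / p.toReal)

/-- The ℓ^p distance from a point of ℝ² to the diagonal `Δ = {(t,t)}`. -/
def diagDist (p : ℝ≥0∞) (z : ℝ × ℝ) : ℝ :=
  ⨅ t : ℝ, lpNorm2 p (z.1 - t, z.2 - t)

/-- A persistence diagram: a finite multiset of points `(b, d)` of ℝ² with `b < d`. -/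
def IsDiagram (X : Multiset (ℝ × ℝ)) : Prop :=
  ∀ z ∈ X, z.1 < z.2

/-- A matching between two diagrams `X` and `Y`: some points of `X` are paired bijectively
with points of `Y`, and every remaining point of `X` or `Y` is left unmatched (assigned to
the diagonal). -/
structure Matching (X Y : Multiset (ℝ × ℝ)) where
  pairs : Multiset ((ℝ × ℝ) × (ℝ × ℝ))
  unmatchedX : Multiset (ℝ × ℝ)
  unmatchedY : Multiset (ℝ × ℝ)
  fst_eq : pairs.map Prod.fst + unmatchedX = X
  snd_eq : pairs.map Prod.snd + unmatchedY = Y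

/-- The ℓ^p displacement of a matched pair. -/
def pairDisp (p : ℝ≥0∞) (c : (ℝ × ℝ) × (ℝ × ℝ)) : ℝ :=
  lpNorm2 p (c.1.1 - c.2.1, c.1.2 - c.2.2)

/-- The `p`-cost of a matching: for `p < ∞` it is
`(∑_{matched pairs} ‖x − y‖_p^p + ∑_{unmatched z} dist_p(z,Δ)^p)^{1/p}`; for `p = ∞` it is
the maximum displacement (over matched pairs and unmatched points). -/
def Matching.cost (p : ℝ≥0∞) {X Y : Multiset (ℝ × ℝ)} (M : Matching X Y) : ℝ :=
  if p = ∞ then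
    sSup (insert (0 : ℝ)
      {r : ℝ | r ∈ M.pairs.map (pairDisp ∞) + (M.unmatchedX + M.unmatchedY).map (diagDist ∞)})
  else
    ((M.pairs.map fun c => pairDisp p c ^ p.toReal).sum +
      ((M.unmatchedX + M.unmatchedY).map fun z => diagDist p z ^ p.toReal).sum) ^ (1 / p.toReal)

/-- The `p`-Wasserstein distance between two persistence diagrams (bottleneck distance for
`p = ∞`): the infimum of the `p`-cost over all matchings. -/
def wassersteinDist (p : ℝ≥0∞) (X Y : Multiset (ℝ × ℝ)) : ℝ :=
  sInf {c : ℝ | ∃ M : Matching X Y, c = M.cost p}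

end

/-! Exponent `1` is forced by the diagram `n · z` of `n` copies of a point `z` with `f z ≠ 0`:
`‖Φ(n · z) - Φ(∅)‖ = n ‖f z‖`, whereas `W_p(n · z, ∅) ≤ n^{1/p} dist_p(z, Δ)` grows sublinearly for
`p > 1`. For `p = 1` a single pair `{z}, {w}` (or `{z}, ∅` when `w` lies on the diagonal) gives the
ℓ¹-Lipschitz bound on `f`. Conversely, an ℓ¹-Lipschitz `f` vanishing on `Δ` satisfies
`‖f z‖ ≤ C dist_1(z, Δ)`, and summing the bounds over the pairs and the unmatched points of any
matching bounds `‖Φ X - Φ Y‖` by `C` times its `1`-cost. -/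

open Multiset

lemma lpNorm2_nonneg (p : ℝ≥0∞) (z : ℝ × ℝ) : 0 ≤ lpNorm2 p z := by
  unfold lpNorm2
  split
  · exact le_max_of_le_left (abs_nonneg _)
  · exact Real.rpow_nonneg (by positivity) _

lemma lpNorm2_one (z : ℝ × ℝ) : lpNorm2 1 z = |z.1| + |z.2| := by
  simp [lpNorm2]

lemma diagDist_nonneg (p : ℝ≥0∞) (z : ℝ × ℝ) : 0 ≤ diagDist p z :=
  Real.iInf_nonneg fun _ => lpNorm2_nonneg _ _

lemma diagDist_le (p : ℝ≥0∞) (z : ℝ × ℝ) (t : ℝ) :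
    diagDist p z ≤ lpNorm2 p (z.1 - t, z.2 - t) :=
  ciInf_le ⟨0, by rintro x ⟨t, rfl⟩; exact lpNorm2_nonneg _ _⟩ t

lemma diagDist_one_le_of_fst_eq_snd {z w : ℝ × ℝ} (hw : w.1 = w.2) :
    diagDist 1 z ≤ |z.1 - w.1| + |z.2 - w.2| := by
  simpa [lpNorm2_one, ← hw] using diagDist_le 1 z w.1

lemma pairDisp_nonneg (p : ℝ≥0∞) (c : (ℝ × ℝ) × (ℝ × ℝ)) : 0 ≤ pairDisp p c :=
  lpNorm2_nonneg _ _

lemma pairDisp_one (c : (ℝ × ℝ) × (ℝ × ℝ)) :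
    pairDisp 1 c = |c.1.1 - c.2.1| + |c.1.2 - c.2.2| :=
  lpNorm2_one _

namespace Matching

variable {X Y : Multiset (ℝ × ℝ)}

lemma fst_mem_of_mem_pairs (M : Matching X Y) {c : (ℝ × ℝ) × (ℝ × ℝ)} (hc : c ∈ M.pairs) :
    c.1 ∈ X :=
  M.fst_eq ▸ mem_add.2 (Or.inl (mem_map_of_mem _ hc))

lemma snd_mem_of_mem_pairs (M : Matching X Y) {c : (ℝ × ℝ) × (ℝ × ℝ)} (hc : c ∈ M.pairs) :
    c.2 ∈ Y :=
  M.snd_eq ▸ mem_add.2 (Or.inl (mem_map_of_mem _ hc))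

lemma mem_of_mem_unmatchedX (M : Matching X Y) {z : ℝ × ℝ} (hz : z ∈ M.unmatchedX) : z ∈ X :=
  M.fst_eq ▸ mem_add.2 (Or.inr hz)

lemma mem_of_mem_unmatchedY (M : Matching X Y) {z : ℝ × ℝ} (hz : z ∈ M.unmatchedY) : z ∈ Y :=
  M.snd_eq ▸ mem_add.2 (Or.inr hz)

lemma sum_map_left {A : Type*} [AddCommMonoid A] (M : Matching X Y) (f : ℝ × ℝ → A) :
    (X.map f).sum = (M.pairs.map fun c => f c.1).sum + (M.unmatchedX.map f).sum := by
  conv_lhs => rw [← M.fst_eq]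
  rw [Multiset.map_add, Multiset.map_map, sum_add]
  rfl

lemma sum_map_right {A : Type*} [AddCommMonoid A] (M : Matching X Y) (f : ℝ × ℝ → A) :
    (Y.map f).sum = (M.pairs.map fun c => f c.2).sum + (M.unmatchedY.map f).sum := by
  conv_lhs => rw [← M.snd_eq]
  rw [Multiset.map_add, Multiset.map_map, sum_add]
  rfl

lemma cost_nonneg (p : ℝ≥0∞) (M : Matching X Y) : 0 ≤ M.cost p := by
  unfold Matching.cost
  split
  · exact le_csSup ((Multiset.finite_toSet _).insert 0).bddAbove (Set.mem_insert _ _)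
  · refine Real.rpow_nonneg (add_nonneg (sum_nonneg ?_) (sum_nonneg ?_)) _
    · simp only [mem_map]
      rintro _ ⟨c, -, rfl⟩
      exact Real.rpow_nonneg (pairDisp_nonneg _ _) _
    · simp only [mem_map]
      rintro _ ⟨z, -, rfl⟩
      exact Real.rpow_nonneg (diagDist_nonneg _ _) _

lemma cost_one (M : Matching X Y) :
    M.cost 1 = (M.pairs.map (pairDisp 1)).sum
      + ((M.unmatchedX + M.unmatchedY).map (diagDist 1)).sum := by
  simp [Matching.cost]

def unmatchedAll (X Y : Multiset (ℝ × ℝ)) : Matching X Y :=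
  ⟨0, X, Y, by simp, by simp⟩

def single (z w : ℝ × ℝ) : Matching {z} {w} :=
  ⟨{(z, w)}, 0, 0, by simp, by simp⟩

lemma cost_one_single (z w : ℝ × ℝ) :
    (single z w).cost 1 = |z.1 - w.1| + |z.2 - w.2| := by
  simp [cost_one, single, pairDisp_one]

/-- With the exponent `(p⁻¹).toReal`, the cases `p < ∞` and `p = ∞` (exponent `0`) read alike. -/
lemma cost_unmatchedAll_replicate {p : ℝ≥0∞} (hp : p ≠ 0) {n : ℕ} (hn : n ≠ 0) (z : ℝ × ℝ) :
    (unmatchedAll (replicate n z) 0).cost p = (n : ℝ) ^ (p⁻¹).toReal * diagDist p z := by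
  have hd := diagDist_nonneg p z
  by_cases hp_top : p = ∞
  · subst hp_top
    have hset : {r : ℝ | r ∈ (0 : Multiset ((ℝ × ℝ) × (ℝ × ℝ))).map (pairDisp ∞)
        + (replicate n z + 0).map (diagDist ∞)} = {diagDist ∞ z} := by
      ext r
      simp [mem_replicate, hn]
    simp only [Matching.cost, unmatchedAll, if_true, hset, ENNReal.inv_top, ENNReal.toReal_zero,
      Real.rpow_zero, one_mul]
    exact (csSup_pair _ _).trans (max_eq_right hd)
  · have hr : p.toReal ≠ 0 := ENNReal.toReal_ne_zero.2 ⟨hp, hp_top⟩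
    simp only [Matching.cost, unmatchedAll, if_neg hp_top, map_zero, sum_zero, add_zero,
      zero_add, map_replicate, sum_replicate, nsmul_eq_mul, ENNReal.toReal_inv, one_div]
    rw [Real.mul_rpow (Nat.cast_nonneg n) (Real.rpow_nonneg hd _), Real.rpow_rpow_inv hd hr]

lemma norm_sum_map_sub_le_mul_cost_one {B : Type*} [SeminormedAddCommGroup B]
    (M : Matching X Y) (f : ℝ × ℝ → B) {C : ℝ}
    (hpairs : ∀ c ∈ M.pairs, ‖f c.1 - f c.2‖ ≤ C * pairDisp 1 c)
    (hunmatched : ∀ z ∈ M.unmatchedX + M.unmatchedY, ‖f z‖ ≤ C * diagDist 1 z) :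
    ‖(X.map f).sum - (Y.map f).sum‖ ≤ C * M.cost 1 := by
  have hsplit : (X.map f).sum - (Y.map f).sum =
      (M.pairs.map fun c => f c.1 - f c.2).sum
        + ((M.unmatchedX.map f).sum - (M.unmatchedY.map f).sum) := by
    rw [M.sum_map_left, M.sum_map_right, sum_map_sub]
    abel
  have hunmatched_sum : ‖(M.unmatchedX.map f).sum - (M.unmatchedY.map f).sum‖
      ≤ C * ((M.unmatchedX + M.unmatchedY).map (diagDist 1)).sum :=
    calc _ ≤ ‖(M.unmatchedX.map f).sum‖ + ‖(M.unmatchedY.map f).sum‖ := norm_sub_le _ _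
      _ ≤ ((M.unmatchedX + M.unmatchedY).map fun z => ‖f z‖).sum := by
        rw [Multiset.map_add, sum_add]
        gcongr <;> exact (norm_multiset_sum_le _).trans_eq (by rw [Multiset.map_map]; rfl)
      _ ≤ _ := by
        rw [← sum_map_mul_left]
        exact sum_map_le_sum_map _ _ hunmatched
  have hpairs_sum : ‖(M.pairs.map fun c => f c.1 - f c.2).sum‖
      ≤ C * (M.pairs.map (pairDisp 1)).sum := by
    refine (norm_multiset_sum_le _).trans ?_
    rw [Multiset.map_map, ← sum_map_mul_left]
    exact sum_map_le_sum_map _ _ hpairs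
  rw [hsplit, cost_one, mul_add]
  exact (norm_add_le _ _).trans (add_le_add hpairs_sum hunmatched_sum)

end Matching

lemma wassersteinDist_le_cost (p : ℝ≥0∞) {X Y : Multiset (ℝ × ℝ)} (M : Matching X Y) :
    wassersteinDist p X Y ≤ M.cost p :=
  csInf_le ⟨0, by rintro c ⟨M', rfl⟩; exact M'.cost_nonneg p⟩ ⟨M, rfl⟩

lemma le_mul_wassersteinDist {X Y : Multiset (ℝ × ℝ)} {p : ℝ≥0∞} {a C : ℝ} (hC : 0 ≤ C)
    (h : ∀ M : Matching X Y, a ≤ C * M.cost p) : a ≤ C * wassersteinDist p X Y := by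
  rcases hC.eq_or_lt with rfl | hC
  · simpa using h (Matching.unmatchedAll X Y)
  rw [mul_comm, ← div_le_iff₀ hC]
  refine le_csInf ⟨_, Matching.unmatchedAll X Y, rfl⟩ ?_
  rintro _ ⟨M, rfl⟩
  rw [div_le_iff₀ hC, mul_comm]
  exact h M

lemma wassersteinDist_replicate_zero_le {p : ℝ≥0∞} (hp : p ≠ 0) {n : ℕ} (hn : n ≠ 0)
    (z : ℝ × ℝ) :
    wassersteinDist p (replicate n z) 0 ≤ (n : ℝ) ^ (p⁻¹).toReal * diagDist p z :=
  (wassersteinDist_le_cost p _).trans_eq (Matching.cost_unmatchedAll_replicate hp hn z)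

lemma wassersteinDist_one_singleton_zero_le (z : ℝ × ℝ) :
    wassersteinDist 1 {z} 0 ≤ diagDist 1 z := by
  have h := wassersteinDist_replicate_zero_le (p := 1) (n := 1) one_ne_zero one_ne_zero z
  rwa [replicate_one, Nat.cast_one, Real.one_rpow, one_mul] at h

lemma wassersteinDist_one_singleton_le (z w : ℝ × ℝ) :
    wassersteinDist 1 {z} {w} ≤ |z.1 - w.1| + |z.2 - w.2| :=
  (wassersteinDist_le_cost 1 _).trans_eq (Matching.cost_one_single z w)

lemma isDiagram_zero : IsDiagram 0 := fun _ h => absurd h (notMem_zero _)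

lemma isDiagram_singleton {z : ℝ × ℝ} (hz : z.1 < z.2) : IsDiagram {z} := by
  simpa [IsDiagram] using hz

lemma isDiagram_replicate {z : ℝ × ℝ} (hz : z.1 < z.2) (n : ℕ) : IsDiagram (replicate n z) :=
  fun _ h => eq_of_mem_replicate h ▸ hz

lemma nonpos_of_forall_natCast_mul_le_mul_rpow {a b s : ℝ} (hs : s < 1)
    (h : ∀ n : ℕ, n ≠ 0 → n * a ≤ b * (n : ℝ) ^ s) : a ≤ 0 := by
  have hlim : Filter.Tendsto (fun n : ℕ => b * (n : ℝ) ^ (s - 1)) Filter.atTop (nhds 0) := by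
    have := ((tendsto_rpow_neg_atTop (sub_pos.2 hs)).comp tendsto_natCast_atTop_atTop).const_mul b
    simpa using this
  refine ge_of_tendsto hlim ((Filter.eventually_ne_atTop 0).mono fun n hn => ?_)
  have hn' : (0 : ℝ) < n := by positivity
  rw [Real.rpow_sub_one hn'.ne', mul_div_assoc', le_div_iff₀ hn', mul_comm]
  exact h n hn

lemma ENNReal.toReal_inv_lt_one {p : ℝ≥0∞} (hp : 1 < p) : (p⁻¹).toReal < 1 := by
  have := (ENNReal.toReal_lt_toReal (by simpa using (zero_lt_one.trans hp).ne')
    ENNReal.one_ne_top).2 (ENNReal.inv_lt_one.2 hp)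
  simpa using this

section LinearRepresentation

variable {B : Type*} [NormedAddCommGroup B] {f : ℝ × ℝ → B} {C : ℝ}

def LipschitzOnDiagrams (p : ℝ≥0∞) (C : ℝ) (f : ℝ × ℝ → B) : Prop :=
  ∀ X Y : Multiset (ℝ × ℝ), IsDiagram X → IsDiagram Y →
    ‖(X.map f).sum - (Y.map f).sum‖ ≤ C * wassersteinDist p X Y

def L1LipschitzOnHalfPlane (C : ℝ) (f : ℝ × ℝ → B) : Prop :=
  ∀ z w : ℝ × ℝ, z.1 ≤ z.2 → w.1 ≤ w.2 → ‖f z - f w‖ ≤ C * (|z.1 - w.1| + |z.2 - w.2|)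

lemma apply_eq_zero_of_fst_eq_snd (hdiag : ∀ t : ℝ, f (t, t) = 0) {z : ℝ × ℝ}
    (hz : z.1 = z.2) : f z = 0 := by
  rw [show z = (z.1, z.1) from Prod.ext rfl hz.symm, hdiag]

lemma LipschitzOnDiagrams.eq_one [NormedSpace ℝ B] {p : ℝ≥0∞}
    (hΦ : LipschitzOnDiagrams p C f) (hdiag : ∀ t : ℝ, f (t, t) = 0)
    (hne : ∃ z : ℝ × ℝ, z.1 ≤ z.2 ∧ f z ≠ 0) (hp : 1 ≤ p) (hC : 0 ≤ C) : p = 1 := by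
  obtain ⟨z, hz, hfz⟩ := hne
  have hz' : z.1 < z.2 := hz.lt_of_ne fun h => hfz (apply_eq_zero_of_fst_eq_snd hdiag h)
  by_contra hp1
  have hp0 : p ≠ 0 := (zero_lt_one.trans_le hp).ne'
  refine (norm_pos_iff.2 hfz).not_ge (nonpos_of_forall_natCast_mul_le_mul_rpow
    (b := C * diagDist p z) (ENNReal.toReal_inv_lt_one (hp.lt_of_ne' hp1)) fun n hn => ?_)
  calc n * ‖f z‖ = ‖((replicate n z).map f).sum - ((0 : Multiset (ℝ × ℝ)).map f).sum‖ := by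
        simp [map_replicate, sum_replicate, RCLike.norm_nsmul ℝ]
    _ ≤ C * wassersteinDist p (replicate n z) 0 :=
        hΦ _ _ (isDiagram_replicate hz' n) isDiagram_zero
    _ ≤ C * ((n : ℝ) ^ (p⁻¹).toReal * diagDist p z) := by
        gcongr; exact wassersteinDist_replicate_zero_le hp0 hn z
    _ = C * diagDist p z * (n : ℝ) ^ (p⁻¹).toReal := by ring

lemma LipschitzOnDiagrams.norm_le_mul_diagDist (hΦ : LipschitzOnDiagrams 1 C f) (hC : 0 ≤ C)
    {z : ℝ × ℝ} (hz : z.1 < z.2) : ‖f z‖ ≤ C * diagDist 1 z := by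
  simpa using (hΦ {z} 0 (isDiagram_singleton hz) isDiagram_zero).trans
    (mul_le_mul_of_nonneg_left (wassersteinDist_one_singleton_zero_le z) hC)

lemma LipschitzOnDiagrams.l1LipschitzOnHalfPlane (hΦ : LipschitzOnDiagrams 1 C f)
    (hdiag : ∀ t : ℝ, f (t, t) = 0) (hC : 0 ≤ C) : L1LipschitzOnHalfPlane C f := by
  have to_diagonal : ∀ z w : ℝ × ℝ, z.1 < z.2 → w.1 = w.2 →
      ‖f z - f w‖ ≤ C * (|z.1 - w.1| + |z.2 - w.2|) := fun z w hz hw => by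
    rw [apply_eq_zero_of_fst_eq_snd hdiag hw, sub_zero]
    exact (hΦ.norm_le_mul_diagDist hC hz).trans
      (mul_le_mul_of_nonneg_left (diagDist_one_le_of_fst_eq_snd hw) hC)
  intro z w hz hw
  rcases hz.lt_or_eq with hz | hz
  · rcases hw.lt_or_eq with hw | hw
    · simpa using (hΦ {z} {w} (isDiagram_singleton hz) (isDiagram_singleton hw)).trans
        (mul_le_mul_of_nonneg_left (wassersteinDist_one_singleton_le z w) hC)
    · exact to_diagonal z w hz hw
  · rcases hw.lt_or_eq with hw | hw
    · rw [norm_sub_rev, abs_sub_comm z.1, abs_sub_comm z.2]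
      exact to_diagonal w z hw hz
    · simp [apply_eq_zero_of_fst_eq_snd hdiag hz, apply_eq_zero_of_fst_eq_snd hdiag hw]
      positivity

lemma L1LipschitzOnHalfPlane.norm_le_mul_diagDist (hf : L1LipschitzOnHalfPlane C f)
    (hdiag : ∀ t : ℝ, f (t, t) = 0) (hC : 0 ≤ C) {z : ℝ × ℝ} (hz : z.1 ≤ z.2) :
    ‖f z‖ ≤ C * diagDist 1 z := by
  rw [diagDist, Real.mul_iInf_of_nonneg hC]
  refine le_ciInf fun t => ?_
  simpa [hdiag, lpNorm2_one] using hf z (t, t) hz le_rfl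

lemma L1LipschitzOnHalfPlane.lipschitzOnDiagrams (hf : L1LipschitzOnHalfPlane C f)
    (hdiag : ∀ t : ℝ, f (t, t) = 0) (hC : 0 ≤ C) : LipschitzOnDiagrams 1 C f := by
  intro X Y hX hY
  refine le_mul_wassersteinDist hC fun M => M.norm_sum_map_sub_le_mul_cost_one f ?_ ?_
  · intro c hc
    rw [pairDisp_one]
    exact hf _ _ (hX _ (M.fst_mem_of_mem_pairs hc)).le (hY _ (M.snd_mem_of_mem_pairs hc)).le
  · intro z hz
    refine hf.norm_le_mul_diagDist hdiag hC ?_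
    rcases mem_add.1 hz with hz | hz
    · exact (hX z (M.mem_of_mem_unmatchedX hz)).le
    · exact (hY z (M.mem_of_mem_unmatchedY hz)).le

end LinearRepresentation

theorem linear_representation_lipschitz_iff_general
    {B : Type*} [NormedAddCommGroup B] [NormedSpace ℝ B]
    (f : ℝ × ℝ → B)
    (hdiag : ∀ t : ℝ, f (t, t) = 0)
    (hne : ∃ z : ℝ × ℝ, z.1 ≤ z.2 ∧ f z ≠ 0)
    (p : ℝ≥0∞) (hp : 1 ≤ p) (C : ℝ) (hC : 0 < C) :
    (∀ X Y : Multiset (ℝ × ℝ), IsDiagram X → IsDiagram Y →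
        ‖(X.map f).sum - (Y.map f).sum‖ ≤ C * wassersteinDist p X Y) ↔
      (p = 1 ∧ ∀ z w : ℝ × ℝ, z.1 ≤ z.2 → w.1 ≤ w.2 →
        ‖f z - f w‖ ≤ C * (|z.1 - w.1| + |z.2 - w.2|)) := by
  constructor
  · intro hΦ
    obtain rfl : p = 1 := LipschitzOnDiagrams.eq_one hΦ hdiag hne hp hC.le
    exact ⟨rfl, LipschitzOnDiagrams.l1LipschitzOnHalfPlane hΦ hdiag hC.le⟩
  · rintro ⟨rfl, hf⟩
    exact L1LipschitzOnHalfPlane.lipschitzOnDiagrams hf hdiag hC.le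

/-- Let `B` be a real Banach space and `f` a function on the closed
half-plane `{(x,y) : x ≤ y}` with values in `B` (modelled as `f : ℝ × ℝ → B`), vanishing on
the diagonal and not identically zero on the half-plane.  Let `Φ(X) = ∑_{x ∈ X} f(x)` be the
associated linear representation of persistence diagrams.  Then for `p ∈ [1,∞]` and `C > 0`,
`Φ` is Lipschitz with constant `C` with respect to `W_p` if and only if `p = 1` and `f` is
Lipschitz with constant `C` with respect to the ℓ¹ metric on ℝ². -/
theorem linear_representation_lipschitz_iff
    {B : Type*} [NormedAddCommGroup B] [NormedSpace ℝ B] [CompleteSpace B]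
    (f : ℝ × ℝ → B)
    (hdiag : ∀ t : ℝ, f (t, t) = 0)
    (hne : ∃ z : ℝ × ℝ, z.1 ≤ z.2 ∧ f z ≠ 0)
    (p : ℝ≥0∞) (hp : 1 ≤ p) (C : ℝ) (hC : 0 < C) :
    (∀ X Y : Multiset (ℝ × ℝ), IsDiagram X → IsDiagram Y →
        ‖(X.map f).sum - (Y.map f).sum‖ ≤ C * wassersteinDist p X Y) ↔
      (p = 1 ∧ ∀ z w : ℝ × ℝ, z.1 ≤ z.2 → w.1 ≤ w.2 →
        ‖f z - f w‖ ≤ C * (|z.1 - w.1| + |z.2 - w.2|)) :=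
  linear_representation_lipschitz_iff_general f hdiag hne p hp C hC
end

section
/- Let a > 0, let 0 < r ≤ a/2, and let q ∈ [1,∞). Then ∫_ℝ |λ_a(t) − λ_{a−r}(t)|^q dt ≥ r^q · (a/2 − r), where λ_s(t) = max(0, min(t, s − t)). -/
open MeasureTheory

/-! On `[a/2, a − r]` both landscapes are on their descending branch, so their difference is
the constant `r` there; the integrand is nonnegative and integrable (continuous with compact
support), so the integral dominates the contribution `r ^ q · (a/2 − r)` of that interval. -/

/-- The first persistence landscape of the one-point persistence diagram `{(0, s)}`:
`λ_s(t) = max 0 (min t (s − t))`. -/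
noncomputable def landscapeFn (s : ℝ) (t : ℝ) : ℝ := max 0 (min t (s - t))

theorem continuous_landscapeFn (s : ℝ) : Continuous (landscapeFn s) := by
  unfold landscapeFn
  fun_prop

theorem landscapeFn_eq_zero_of_notMem_Icc {s t : ℝ} (ht : t ∉ Set.Icc 0 s) :
    landscapeFn s t = 0 := by
  rw [Set.mem_Icc, not_and_or, not_le, not_le] at ht
  refine max_eq_left ?_
  rcases ht with ht | ht
  · exact (min_le_left _ _).trans ht.le
  · exact (min_le_right _ _).trans (by linarith)

theorem hasCompactSupport_landscapeFn (s : ℝ) : HasCompactSupport (landscapeFn s) :=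
  HasCompactSupport.intro isCompact_Icc fun _ => landscapeFn_eq_zero_of_notMem_Icc

theorem landscapeFn_eq_sub_of_mem_Icc {s t : ℝ} (ht : t ∈ Set.Icc (s / 2) s) :
    landscapeFn s t = s - t := by
  obtain ⟨h1, h2⟩ := ht
  rw [landscapeFn, min_eq_right (by linarith), max_eq_right (by linarith)]

theorem integrable_abs_sub_landscapeFn_rpow (s s' : ℝ) {q : ℝ} (hq : 0 < q) :
    Integrable fun t => |landscapeFn s t - landscapeFn s' t| ^ q := by
  have hdiff := (hasCompactSupport_landscapeFn s).sub (hasCompactSupport_landscapeFn s')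
  refine Continuous.integrable_of_hasCompactSupport ?_
    (hdiff.comp_left (g := fun x : ℝ => |x| ^ q) (by simp [hq.ne']))
  exact ((continuous_landscapeFn s).sub (continuous_landscapeFn s')).abs.rpow_const
    fun _ => Or.inr hq.le

theorem landscape_Lq_lower_bound_general
    (a r q : ℝ) (hr : 0 < r) (hra : r ≤ a / 2) (hq : 1 ≤ q) :
    r ^ q * (a / 2 - r) ≤ ∫ t : ℝ, |landscapeFn a t - landscapeFn (a - r) t| ^ q := by
  have hdiff : ∀ t ∈ Set.Icc (a / 2) (a - r),
      |landscapeFn a t - landscapeFn (a - r) t| ^ q = r ^ q := by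
    rintro t ⟨h1, h2⟩
    rw [landscapeFn_eq_sub_of_mem_Icc ⟨h1, by linarith⟩,
      landscapeFn_eq_sub_of_mem_Icc ⟨by linarith, h2⟩, sub_sub_sub_cancel_right, sub_sub_cancel,
      abs_of_pos hr]
  calc r ^ q * (a / 2 - r)
      = ∫ t in Set.Icc (a / 2) (a - r), r ^ q := by
        rw [setIntegral_const, Real.volume_real_Icc, max_eq_left (by linarith), smul_eq_mul]
        ring
    _ = ∫ t in Set.Icc (a / 2) (a - r), |landscapeFn a t - landscapeFn (a - r) t| ^ q :=
        (setIntegral_congr_fun measurableSet_Icc hdiff).symm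
    _ ≤ ∫ t, |landscapeFn a t - landscapeFn (a - r) t| ^ q :=
        setIntegral_le_integral (integrable_abs_sub_landscapeFn_rpow _ _ (by linarith))
          (Filter.Eventually.of_forall fun _ => by positivity)

/-- For `a > 0`, `0 < r ≤ a/2` and `q ∈ [1,∞)`,
`∫_ℝ |λ_a(t) − λ_{a−r}(t)|^q dt ≥ r^q · (a/2 − r)`. -/
theorem landscape_Lq_lower_bound
    (a r q : ℝ) (ha : 0 < a) (hr : 0 < r) (hra : r ≤ a / 2) (hq : 1 ≤ q) :
    r ^ q * (a / 2 - r) ≤ ∫ t : ℝ, |landscapeFn a t - landscapeFn (a - r) t| ^ q :=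
  landscape_Lq_lower_bound_general a r q hr hra hq
end

section
/- Let R be a ring and suppose we are given two long exact sequences of R-modules, ⋯ → A_k →^{φ_k} B_k →^{ψ_k} C_k →^{δ_k} A_{k−1} → ⋯ and ⋯ → A'_k →^{φ'_k} B'_k →^{ψ'_k} C'_k →^{δ'_k} A'_{k−1} → ⋯ (indexed by k ∈ ℤ), together with module maps f_k : A_k → A'_k, g_k : B_k → B'_k, h_k : C_k → C'_k making every square commute, and such that every h_k is an isomorphism. Then the sequence ⋯ → A_k →^{(φ_k, f_k)} B_k ⊕ A'_k →^{g_k − φ'_k} B'_k →^{δ_k ∘ h_k^{−1} ∘ ψ'_k} A_{k−1} → ⋯ is exact (at every position). -/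
/-!
Exactness of the collapsed sequence at each of its three positions is a diagram chase in a
segment of the ladder around that position. Injectivity of `h` detects `ψ b = 0` in `C'`, and
surjectivity of `h` lifts elements of `C'` back to `C`; this is all the interaction between the
two rows that the chase needs.
-/

open Function
open LinearMap (fst snd)

namespace MayerVietoris

variable {R : Type*} [Semiring R]
  {C₀ A B C A₁ B₁ C₀' A' B' C' A₁' : Type*}
  [AddCommGroup C₀] [Module R C₀] [AddCommGroup A] [Module R A]
  [AddCommGroup B] [Module R B] [AddCommGroup C] [Module R C]
  [AddCommGroup A₁] [Module R A₁] [AddCommGroup B₁] [Module R B₁]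
  [AddCommGroup C₀'] [Module R C₀'] [AddCommGroup A'] [Module R A']
  [AddCommGroup B'] [Module R B'] [AddCommGroup C'] [Module R C']
  [AddCommGroup A₁'] [Module R A₁']

theorem exact_prod_sub
    {δ₀ : C₀ →ₗ[R] A} {φ : A →ₗ[R] B} {ψ : B →ₗ[R] C}
    {δ₀' : C₀' →ₗ[R] A'} {φ' : A' →ₗ[R] B'} {ψ' : B' →ₗ[R] C'}
    {h₀ : C₀ →ₗ[R] C₀'} {f : A →ₗ[R] A'} {g : B →ₗ[R] B'} {h : C →ₗ[R] C'}
    (hφδ₀ : φ ∘ₗ δ₀ = 0) (hφψ : Exact φ ψ) (hδ₀'φ' : Exact δ₀' φ') (hψ'φ' : ψ' ∘ₗ φ' = 0)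
    (sq₀ : f ∘ₗ δ₀ = δ₀' ∘ₗ h₀) (sq₁ : g ∘ₗ φ = φ' ∘ₗ f) (sq₂ : h ∘ₗ ψ = ψ' ∘ₗ g)
    (hh₀ : Surjective h₀) (hh : Injective h) :
    Exact (φ.prod f) (g ∘ₗ fst R B A' - φ' ∘ₗ snd R B A') := by
  have hφδ₀ : ∀ c, φ (δ₀ c) = 0 := LinearMap.congr_fun hφδ₀
  have hψ'φ' : ∀ a', ψ' (φ' a') = 0 := LinearMap.congr_fun hψ'φ'
  have sq₀ : ∀ c, f (δ₀ c) = δ₀' (h₀ c) := LinearMap.congr_fun sq₀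
  have sq₁ : ∀ a, g (φ a) = φ' (f a) := LinearMap.congr_fun sq₁
  have sq₂ : ∀ b, h (ψ b) = ψ' (g b) := LinearMap.congr_fun sq₂
  rintro ⟨b, a'⟩
  simp only [LinearMap.sub_apply, LinearMap.comp_apply, LinearMap.fst_apply,
    LinearMap.snd_apply, sub_eq_zero, Set.mem_range, LinearMap.prod_apply, Function.prod,
    Prod.mk.injEq]
  constructor
  · intro hba
    obtain ⟨a, rfl⟩ := (hφψ b).mp <| hh <| by rw [sq₂, hba, hψ'φ', map_zero]
    -- `a'` and `f a` differ by an element of the image of `δ₀'`, which lifts along `h₀`.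
    obtain ⟨c', hc'⟩ := (hδ₀'φ' (a' - f a)).mp (by rw [map_sub, ← sq₁, hba, sub_self])
    obtain ⟨c, rfl⟩ := hh₀ c'
    exact ⟨a + δ₀ c, by rw [map_add, hφδ₀, add_zero],
      by rw [map_add, sq₀, hc', add_sub_cancel]⟩
  · rintro ⟨a, rfl, rfl⟩
    exact sq₁ a

theorem exact_sub_connecting
    {ψ : B →ₗ[R] C} {δ : C →ₗ[R] A₁} {φ' : A' →ₗ[R] B'} {ψ' : B' →ₗ[R] C'}
    {g : B →ₗ[R] B'} {h : C ≃ₗ[R] C'}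
    (hψδ : Exact ψ δ) (hφψ' : Exact φ' ψ') (sq₂ : h.toLinearMap ∘ₗ ψ = ψ' ∘ₗ g) :
    Exact (g ∘ₗ fst R B A' - φ' ∘ₗ snd R B A') (δ ∘ₗ h.symm.toLinearMap ∘ₗ ψ') := by
  have sq₂ : ∀ b, h (ψ b) = ψ' (g b) := LinearMap.congr_fun sq₂
  intro b'
  simp only [LinearMap.sub_apply, LinearMap.comp_apply, LinearEquiv.coe_coe,
    LinearMap.fst_apply, LinearMap.snd_apply, Set.mem_range]
  constructor
  · intro hb'
    obtain ⟨b, hb⟩ := (hψδ _).mp hb'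
    obtain ⟨a', ha'⟩ := (hφψ' (b' - g b)).mp (by
      rw [map_sub, ← sq₂, hb, h.apply_symm_apply, sub_self])
    exact ⟨(b, -a'), by rw [map_neg, sub_neg_eq_add, ha', add_sub_cancel]⟩
  · rintro ⟨⟨b, a'⟩, rfl⟩
    rw [map_sub, hφψ'.apply_apply_eq_zero, sub_zero, ← sq₂, h.symm_apply_apply,
      hψδ.apply_apply_eq_zero]

theorem exact_connecting_prod
    {δ : C →ₗ[R] A₁} {φ₁ : A₁ →ₗ[R] B₁} {ψ' : B' →ₗ[R] C'} {δ' : C' →ₗ[R] A₁'}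
    {f₁ : A₁ →ₗ[R] A₁'} {h : C ≃ₗ[R] C'}
    (hδφ : Exact δ φ₁) (hψδ' : Exact ψ' δ') (sq₃ : f₁ ∘ₗ δ = δ' ∘ₗ h.toLinearMap) :
    Exact (δ ∘ₗ h.symm.toLinearMap ∘ₗ ψ') (φ₁.prod f₁) := by
  have sq₃ : ∀ c, f₁ (δ c) = δ' (h c) := LinearMap.congr_fun sq₃
  intro a
  simp only [LinearMap.prod_apply, Function.prod, Prod.mk_eq_zero, LinearMap.comp_apply,
    LinearEquiv.coe_coe, Set.mem_range]
  constructor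
  · rintro ⟨hφa, hfa⟩
    obtain ⟨c, rfl⟩ := (hδφ a).mp hφa
    obtain ⟨b', hb'⟩ := (hψδ' (h c)).mp (by rw [← sq₃, hfa])
    exact ⟨b', by rw [hb', h.symm_apply_apply]⟩
  · rintro ⟨b', rfl⟩
    exact ⟨hδφ.apply_apply_eq_zero _, by
      rw [sq₃, h.apply_symm_apply, hψδ'.apply_apply_eq_zero]⟩

end MayerVietoris

/-- **algebraic Mayer–Vietoris.**
Given two long exact sequences of `R`-modules
`⋯ → A k →^{φ k} B k →^{ψ k} C k →^{δ k} A (k−1) → ⋯` and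
`⋯ → A' k →^{φ' k} B' k →^{ψ' k} C' k →^{δ' k} A' (k−1) → ⋯`,
connected by a commutative ladder `f, g, h` in which every vertical map
`h k : C k → C' k` is an isomorphism (encoded as a linear equivalence), the collapsed
sequence `⋯ → A k →^{(φ k, f k)} B k ⊕ A' k →^{g k − φ' k} B' k →^{δ k ∘ (h k)⁻¹ ∘ ψ' k}
A (k−1) → ⋯` is exact at every position. -/
theorem algebraic_mayer_vietoris
    (R : Type*) [Ring R]
    (A B C A' B' C' : ℤ → Type*)
    [∀ k, AddCommGroup (A k)] [∀ k, Module R (A k)]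
    [∀ k, AddCommGroup (B k)] [∀ k, Module R (B k)]
    [∀ k, AddCommGroup (C k)] [∀ k, Module R (C k)]
    [∀ k, AddCommGroup (A' k)] [∀ k, Module R (A' k)]
    [∀ k, AddCommGroup (B' k)] [∀ k, Module R (B' k)]
    [∀ k, AddCommGroup (C' k)] [∀ k, Module R (C' k)]
    (φ : ∀ k, A k →ₗ[R] B k) (ψ : ∀ k, B k →ₗ[R] C k) (δ : ∀ k, C k →ₗ[R] A (k - 1))
    (φ' : ∀ k, A' k →ₗ[R] B' k) (ψ' : ∀ k, B' k →ₗ[R] C' k) (δ' : ∀ k, C' k →ₗ[R] A' (k - 1))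
    (f : ∀ k, A k →ₗ[R] A' k) (g : ∀ k, B k →ₗ[R] B' k) (h : ∀ k, C k ≃ₗ[R] C' k)
    -- exactness of the first row
    (hex₁ : ∀ k, Function.Exact (φ k) (ψ k))
    (hex₂ : ∀ k, Function.Exact (ψ k) (δ k))
    (hex₃ : ∀ k, Function.Exact (δ k) (φ (k - 1)))
    -- exactness of the second row
    (hex₁' : ∀ k, Function.Exact (φ' k) (ψ' k))
    (hex₂' : ∀ k, Function.Exact (ψ' k) (δ' k))
    (hex₃' : ∀ k, Function.Exact (δ' k) (φ' (k - 1)))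
    -- commutativity of the ladder
    (hsq₁ : ∀ k, (g k) ∘ₗ (φ k) = (φ' k) ∘ₗ (f k))
    (hsq₂ : ∀ k, ((h k).toLinearMap) ∘ₗ (ψ k) = (ψ' k) ∘ₗ (g k))
    (hsq₃ : ∀ k, (f (k - 1)) ∘ₗ (δ k) = (δ' k) ∘ₗ ((h k).toLinearMap)) :
    ∀ k : ℤ,
      Function.Exact ((φ k).prod (f k))
          ((g k) ∘ₗ (LinearMap.fst R (B k) (A' k)) - (φ' k) ∘ₗ (LinearMap.snd R (B k) (A' k))) ∧
      Function.Exact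
          ((g k) ∘ₗ (LinearMap.fst R (B k) (A' k)) - (φ' k) ∘ₗ (LinearMap.snd R (B k) (A' k)))
          ((δ k) ∘ₗ (h k).symm.toLinearMap ∘ₗ (ψ' k)) ∧
      Function.Exact ((δ k) ∘ₗ (h k).symm.toLinearMap ∘ₗ (ψ' k))
          ((φ (k - 1)).prod (f (k - 1))) := by
  intro k
  -- With `k = m - 1`, the maps `δ m` and `δ' m` land in `A k` and `A' k` on the nose.
  obtain ⟨m, rfl⟩ : ∃ m, k = m - 1 := ⟨k + 1, by ring⟩
  exact ⟨MayerVietoris.exact_prod_sub (hex₃ m).linearMap_comp_eq_zero (hex₁ _) (hex₃' m)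
      (hex₁' _).linearMap_comp_eq_zero (hsq₃ m) (hsq₁ _) (hsq₂ _) (h m).surjective
      (h _).injective,
    MayerVietoris.exact_sub_connecting (hex₂ _) (hex₁' _) (hsq₂ _),
    MayerVietoris.exact_connecting_prod (hex₃ _) (hex₂' _) (hsq₃ _)⟩
end

section
/- Let K be a field and suppose we are given two long exact sequences of finite-dimensional K-vector spaces, ⋯ → L_k →^{i_k} M_k →^{j_k} N_k →^{∂_k} L_{k−1} → ⋯ and ⋯ → L'_k →^{i'_k} M'_k →^{j'_k} N'_k →^{∂'_k} L'_{k−1} → ⋯ (indexed by k ∈ ℤ), connected by a commutative ladder of linear maps φ_k : L_k → L'_k, m_k : M_k → M'_k, η_k : N_k → N'_k, where every m_k is an isomorphism. Then for every k: (i) dim(coker η_k) ≤ dim(coker φ_{k−1}), and (ii) dim(ker η_k) ≤ dim(ker φ_{k−1}) + dim(coker φ_k). -/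
open Module Submodule LinearMap in
/-- Given two long exact sequences of finite-dimensional `K`-vector spaces
`⋯ → L k →^{i k} M k →^{j k} N k →^{∂ k} L (k−1) → ⋯` and
`⋯ → L' k →^{i' k} M' k →^{j' k} N' k →^{∂' k} L' (k−1) → ⋯`,
connected by a commutative ladder `φ, m, η` with every `m k` an isomorphism (encoded as a
linear equivalence), for every `k` one has
`dim (coker (η k)) ≤ dim (coker (φ (k−1)))` and
`dim (ker (η k)) ≤ dim (ker (φ (k−1))) + dim (coker (φ k))`. -/
theorem ladder_ker_coker_dim_bounds
    (K : Type*) [Field K]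
    (L M N L' M' N' : ℤ → Type*)
    [∀ k, AddCommGroup (L k)] [∀ k, Module K (L k)] [∀ k, FiniteDimensional K (L k)]
    [∀ k, AddCommGroup (M k)] [∀ k, Module K (M k)] [∀ k, FiniteDimensional K (M k)]
    [∀ k, AddCommGroup (N k)] [∀ k, Module K (N k)] [∀ k, FiniteDimensional K (N k)]
    [∀ k, AddCommGroup (L' k)] [∀ k, Module K (L' k)] [∀ k, FiniteDimensional K (L' k)]
    [∀ k, AddCommGroup (M' k)] [∀ k, Module K (M' k)] [∀ k, FiniteDimensional K (M' k)]
    [∀ k, AddCommGroup (N' k)] [∀ k, Module K (N' k)] [∀ k, FiniteDimensional K (N' k)]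
    (i : ∀ k, L k →ₗ[K] M k) (j : ∀ k, M k →ₗ[K] N k) (d : ∀ k, N k →ₗ[K] L (k - 1))
    (i' : ∀ k, L' k →ₗ[K] M' k) (j' : ∀ k, M' k →ₗ[K] N' k) (d' : ∀ k, N' k →ₗ[K] L' (k - 1))
    (φ : ∀ k, L k →ₗ[K] L' k) (m : ∀ k, M k ≃ₗ[K] M' k) (η : ∀ k, N k →ₗ[K] N' k)
    -- exactness of the first row
    (hex₁ : ∀ k, Function.Exact (i k) (j k))
    (hex₂ : ∀ k, Function.Exact (j k) (d k))
    (hex₃ : ∀ k, Function.Exact (d k) (i (k - 1)))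
    -- exactness of the second row
    (hex₁' : ∀ k, Function.Exact (i' k) (j' k))
    (hex₂' : ∀ k, Function.Exact (j' k) (d' k))
    (hex₃' : ∀ k, Function.Exact (d' k) (i' (k - 1)))
    -- commutativity of the ladder
    (hsq₁ : ∀ k, ((m k).toLinearMap) ∘ₗ (i k) = (i' k) ∘ₗ (φ k))
    (hsq₂ : ∀ k, (η k) ∘ₗ (j k) = (j' k) ∘ₗ ((m k).toLinearMap))
    (hsq₃ : ∀ k, (φ (k - 1)) ∘ₗ (d k) = (d' k) ∘ₗ (η k)) :
    ∀ k : ℤ,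
      Module.finrank K (N' k ⧸ LinearMap.range (η k)) ≤
        Module.finrank K (L' (k - 1) ⧸ LinearMap.range (φ (k - 1))) ∧
      Module.finrank K (LinearMap.ker (η k)) ≤
        Module.finrank K (LinearMap.ker (φ (k - 1))) +
          Module.finrank K (L' k ⧸ LinearMap.range (φ k)) := by
  intro k
  constructor
  · -- part (i)
    set g : N' k →ₗ[K] L' (k-1) ⧸ LinearMap.range (φ (k-1)) :=
      (LinearMap.range (φ (k-1))).mkQ ∘ₗ d' k with hg
    have hker : LinearMap.ker g = LinearMap.range (η k) := by
      apply le_antisymm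
      · rintro y' hy'
        have hy'' : d' k y' ∈ LinearMap.range (φ (k-1)) := by
          simpa [hg, Submodule.Quotient.mk_eq_zero] using hy'
        obtain ⟨x, hx⟩ := hy''
        have hix : i (k-1) x = 0 := by
          apply (m (k-1)).injective
          have h1 : (m (k-1)) (i (k-1) x) = i' (k-1) (φ (k-1) x) :=
            congrFun (congrArg DFunLike.coe (hsq₁ (k-1))) x
          rw [map_zero, h1, hx, (hex₃' k).apply_apply_eq_zero y']
        obtain ⟨y, hy⟩ := (hex₃ k x).mp hix
        have hd : d' k (y' - η k y) = 0 := by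
          have h2 : φ (k-1) (d k y) = d' k (η k y) :=
            congrFun (congrArg DFunLike.coe (hsq₃ k)) y
          rw [map_sub, ← h2, hy, hx, sub_self]
        obtain ⟨z', hz'⟩ := (hex₂' k _).mp hd
        refine ⟨y + j k ((m k).symm z'), ?_⟩
        have h3 : η k (j k ((m k).symm z')) = j' k (m k ((m k).symm z')) :=
          congrFun (congrArg DFunLike.coe (hsq₂ k)) _
        rw [map_add, h3, (m k).apply_symm_apply, hz']
        abel
      · rintro _ ⟨y, rfl⟩
        have h2 : φ (k-1) (d k y) = d' k (η k y) :=
          congrFun (congrArg DFunLike.coe (hsq₃ k)) y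
        simp only [hg, LinearMap.mem_ker, LinearMap.coe_comp, Function.comp_apply,
          Submodule.mkQ_apply, Submodule.Quotient.mk_eq_zero]
        exact ⟨d k y, h2⟩
    have e1 := LinearMap.finrank_range_add_finrank_ker g
    have e2 := Submodule.finrank_quotient_add_finrank (LinearMap.range (η k))
    rw [hker] at e1
    have e3 : finrank K (LinearMap.range g) ≤
        finrank K (L' (k - 1) ⧸ LinearMap.range (φ (k - 1))) :=
      Submodule.finrank_le _
    omega
  · -- part (ii)
    set D : (LinearMap.ker (η k)) →ₗ[K] L (k-1) :=
      (d k) ∘ₗ (LinearMap.ker (η k)).subtype with hD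
    have eD := LinearMap.finrank_range_add_finrank_ker D
    -- range D ≤ ker φ (k-1)
    have hrange : LinearMap.range D ≤ LinearMap.ker (φ (k-1)) := by
      rintro _ ⟨⟨y, hy⟩, rfl⟩
      have h2 : φ (k-1) (d k y) = d' k (η k y) :=
        congrFun (congrArg DFunLike.coe (hsq₃ k)) y
      simp only [LinearMap.mem_ker, hD, LinearMap.coe_comp, Function.comp_apply,
        Submodule.coe_subtype, h2]
      rw [show η k y = 0 from hy, map_zero]
    have e4 : finrank K (LinearMap.range D) ≤ finrank K (LinearMap.ker (φ (k-1))) :=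
      Submodule.finrank_mono hrange
    -- compute finrank (ker D)
    have hkerD : LinearMap.ker D = Submodule.comap (LinearMap.ker (η k)).subtype
        (LinearMap.ker (η k) ⊓ LinearMap.ker (d k)) := by
      rw [hD, LinearMap.ker_comp, Submodule.comap_inf, Submodule.comap_subtype_self]
      simp
    have e5 : finrank K (LinearMap.ker D)
        = finrank K (LinearMap.ker (η k) ⊓ LinearMap.ker (d k) : Submodule K (N k)) := by
      rw [hkerD]
      exact LinearEquiv.finrank_eq (Submodule.comapSubtypeEquivOfLe inf_le_left)
    -- ker η ⊓ ker d = map j A where A = comap j (ker η)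
    set A : Submodule K (M k) := Submodule.comap (j k) (LinearMap.ker (η k)) with hA
    have hmap : Submodule.map (j k) A = LinearMap.ker (η k) ⊓ LinearMap.ker (d k) := by
      rw [hA, Submodule.map_comap_eq, LinearMap.exact_iff.mp (hex₂ k)]
      rw [inf_comm]
    set f : A →ₗ[K] N k := (j k) ∘ₗ A.subtype with hf
    have ef := LinearMap.finrank_range_add_finrank_ker f
    have hfr : LinearMap.range f = Submodule.map (j k) A := by
      rw [hf, LinearMap.range_comp, Submodule.range_subtype]
    have hkj : LinearMap.ker (j k) ≤ A := by
      intro x hx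
      simp only [hA, Submodule.mem_comap, LinearMap.mem_ker] at *
      rw [hx, map_zero]
    have hfk : finrank K (LinearMap.ker f) = finrank K (LinearMap.ker (j k)) := by
      rw [hf, LinearMap.ker_comp]
      exact LinearEquiv.finrank_eq (Submodule.comapSubtypeEquivOfLe hkj)
    -- finrank A = finrank (ker j')
    have hA' : A = Submodule.comap ((m k).toLinearMap) (LinearMap.ker (j' k)) := by
      rw [hA, ← LinearMap.ker_comp, hsq₂ k, LinearMap.ker_comp]
    have eA : finrank K A = finrank K (LinearMap.ker (j' k)) := by
      rw [hA', Submodule.comap_equiv_eq_map_symm]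
      exact LinearEquiv.finrank_map_eq _ _
    -- translate kernels to ranges
    have hkj' : LinearMap.ker (j' k) = LinearMap.range (i' k) := LinearMap.exact_iff.mp (hex₁' k)
    have hkjr : LinearMap.ker (j k) = LinearMap.range (i k) := LinearMap.exact_iff.mp (hex₁ k)
    -- now the coker bound: finrank (range i') = finrank (range i) + finrank (range q)
    set W : Submodule K (M' k) := Submodule.map ((m k).toLinearMap) (LinearMap.range (i k))
      with hW
    have hW' : W = Submodule.map (i' k) (LinearMap.range (φ k)) := by
      rw [hW, ← LinearMap.range_comp, hsq₁ k, LinearMap.range_comp]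
    have eW : finrank K W = finrank K (LinearMap.range (i k)) :=
      LinearEquiv.finrank_map_eq _ _
    set q : L' k →ₗ[K] M' k ⧸ W := W.mkQ ∘ₗ i' k with hq
    have eq1 := LinearMap.finrank_range_add_finrank_ker q
    have hφq : LinearMap.range (φ k) ≤ LinearMap.ker q := by
      rintro _ ⟨x, rfl⟩
      simp only [hq, LinearMap.mem_ker, LinearMap.coe_comp, Function.comp_apply,
        Submodule.mkQ_apply, Submodule.Quotient.mk_eq_zero]
      rw [hW']
      exact Submodule.mem_map_of_mem ⟨x, rfl⟩
    have e6 : finrank K (LinearMap.range (φ k)) ≤ finrank K (LinearMap.ker q) :=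
      Submodule.finrank_mono hφq
    have e7 := Submodule.finrank_quotient_add_finrank (LinearMap.range (φ k))
    -- rank-nullity for mkQ restricted to range i'
    set f2 : (LinearMap.range (i' k)) →ₗ[K] M' k ⧸ W :=
      W.mkQ ∘ₗ (LinearMap.range (i' k)).subtype with hf2
    have ef2 := LinearMap.finrank_range_add_finrank_ker f2
    have hWle : W ≤ LinearMap.range (i' k) := by
      rw [hW']
      rintro _ ⟨_, ⟨x, rfl⟩, rfl⟩
      exact ⟨φ k x, rfl⟩
    have hf2r : LinearMap.range f2 = LinearMap.range q := by
      rw [hf2, hq, LinearMap.range_comp, LinearMap.range_comp, Submodule.range_subtype]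
    have hf2k : finrank K (LinearMap.ker f2) = finrank K W := by
      rw [hf2, LinearMap.ker_comp, Submodule.ker_mkQ]
      exact LinearEquiv.finrank_eq (Submodule.comapSubtypeEquivOfLe hWle)
    rw [hf2r, hf2k] at ef2
    rw [hfr, hmap, hfk, hkjr] at ef
    rw [hkj'] at eA
    rw [← e5] at ef
    -- assemble
    omega
end

section
/- Let x, y, a be points in a real inner product space such that the undirected angle ∠(a, x, y) at the vertex x is at most π/3 and ‖x − y‖ ≤ ‖a − x‖. Then ‖a − y‖ ≤ ‖a − x‖. -/
open EuclideanGeometry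

/-- If the undirected angle `∠ a x y` at vertex `x` is at most `π/3`
and `‖x − y‖ ≤ ‖a − x‖`, then `‖a − y‖ ≤ ‖a − x‖`. -/
theorem norm_sub_le_of_angle_le_pi_div_three
    {V : Type*} [NormedAddCommGroup V] [InnerProductSpace ℝ V]
    (x y a : V)
    (h₁ : ∠ a x y ≤ Real.pi / 3)
    (h₂ : ‖x - y‖ ≤ ‖a - x‖) :
    ‖a - y‖ ≤ ‖a - x‖ := by
  have hlc := EuclideanGeometry.law_cos a x y
  have hd1 : dist a x = ‖a - x‖ := dist_eq_norm a x
  have hd2 : dist y x = ‖x - y‖ := by rw [dist_comm]; exact dist_eq_norm x y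
  have hd3 : dist a y = ‖a - y‖ := dist_eq_norm a y
  have hcos : (1:ℝ)/2 ≤ Real.cos (∠ a x y) := by
    have h0 : 0 ≤ ∠ a x y := EuclideanGeometry.angle_nonneg a x y
    have := Real.cos_le_cos_of_nonneg_of_le_pi h0
      (by linarith [Real.pi_pos]) h₁
    rwa [Real.cos_pi_div_three] at this
  have hn1 : 0 ≤ ‖a - x‖ := norm_nonneg _
  have hn2 : 0 ≤ ‖x - y‖ := norm_nonneg _
  have hn3 : 0 ≤ ‖a - y‖ := norm_nonneg _
  rw [hd1, hd2, hd3] at hlc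
  nlinarith [mul_le_mul_of_nonneg_left hcos (by positivity : (0:ℝ) ≤ 2 * ‖a - x‖ * ‖x - y‖), mul_nonneg hn2 (sub_nonneg.mpr h₂)]
end

section
/- In the Euclidean plane ℝ², let x, y, a be points such that ∠(a, x, y) ≤ π/2 and the side xy is a longest side of the triangle, i.e. ‖a − x‖ ≤ ‖x − y‖ and ‖a − y‖ ≤ ‖x − y‖. Let y' be a point lying in the closed half-plane bounded by the line through x and y that contains a, with ∠(y, x, y') ≤ π/3 and ‖x − y'‖ ≥ ‖x − y‖. Then ‖y − y'‖ ≤ ‖x − y'‖ and ‖a − y'‖ ≤ ‖x − y'‖. -/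
/-!
Put `x` at the origin and let `u, v, w` be the vectors to `y, a, y'`, with `α, β` the angles
from `u` to `v` and to `w`. The goal `‖v - w‖ ≤ ‖w‖` says `‖v‖² ≤ 2⟪v, w⟫`. Because `v` and `w`
lie on the same side of the line `ℝu`, the identity `⟪u, v⟫⟪u, w⟫ + ω(u, v) ω(u, w) = ‖u‖²⟪v, w⟫`
for the area form `ω` gives `⟪v, w⟫ = ‖v‖‖w‖ cos (α - β)`, and `|α - β| ≤ max α β`. If `β ≤ α`,
then `‖v‖ ≤ 2‖u‖ cos α` (this is `‖v - u‖ ≤ ‖u‖`) `≤ 2‖w‖ cos (α - β)`; if `α ≤ β ≤ π/3`, then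
`‖v‖ ≤ ‖w‖ ≤ 2‖w‖ cos (α - β)`. The bound for `y` is the special case `a = y`.
-/

theorem SameRay.map_mul_map_nonneg {R M : Type*} [Field R] [LinearOrder R] [IsStrictOrderedRing R]
    [AddCommGroup M] [Module R M] {x y : M} (h : SameRay R x y) (f : M →ₗ[R] R) :
    0 ≤ f x * f y := by
  obtain ⟨z, a, b, ha, hb, -, rfl, rfl⟩ := h.exists_eq_smul
  simp only [map_smul, smul_eq_mul]
  nlinarith [mul_nonneg (mul_nonneg ha hb) (mul_self_nonneg (f z))]

theorem AffineSubspace.WSameSide.map_vsub_mul_map_vsub_nonneg {R V P : Type*} [Field R]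
    [LinearOrder R] [IsStrictOrderedRing R] [AddCommGroup V] [Module R V] [AddTorsor V P]
    {s : AffineSubspace R P} {a b p : P} (h : s.WSameSide a b) (hp : p ∈ s) (f : V →ₗ[R] R)
    (hf : ∀ v ∈ s.direction, f v = 0) : 0 ≤ f (a -ᵥ p) * f (b -ᵥ p) := by
  obtain ⟨p₁, hp₁, p₂, hp₂, hray⟩ := h
  have hshift : ∀ c q, q ∈ s → f (c -ᵥ q) = f (c -ᵥ p) := fun c q hq => by
    rw [← vsub_add_vsub_cancel c p q, map_add, hf _ (s.vsub_mem_direction hp hq), add_zero]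
  simpa only [hshift a p₁ hp₁, hshift b p₂ hp₂] using hray.map_mul_map_nonneg f

theorem norm_sub_le_norm_iff_sq_le_two_mul_inner {F : Type*} [NormedAddCommGroup F]
    [InnerProductSpace ℝ F] (v w : F) : ‖v - w‖ ≤ ‖w‖ ↔ ‖v‖ ^ 2 ≤ 2 * inner ℝ v w := by
  rw [← sq_le_sq₀ (norm_nonneg _) (norm_nonneg _), norm_sub_sq_real]
  constructor <;> intro h <;> linarith

namespace Orientation

variable {E : Type*} [NormedAddCommGroup E] [InnerProductSpace ℝ E] [Fact (Module.finrank ℝ E = 2)]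
  (o : Orientation ℝ E (Fin 2))

local notation "ω" => o.areaForm

open InnerProductGeometry Real

theorem areaForm_mul_areaForm_nonneg_of_wSameSide {P : Type*} [MetricSpace P]
    [NormedAddTorsor E P] {p q a b : P} (h : (affineSpan ℝ {p, q}).WSameSide a b) :
    0 ≤ ω (q -ᵥ p) (a -ᵥ p) * ω (q -ᵥ p) (b -ᵥ p) := by
  refine h.map_vsub_mul_map_vsub_nonneg (left_mem_affineSpan_pair ℝ p q) (ω (q -ᵥ p)) ?_
  intro v hv
  rw [direction_affineSpan, vectorSpan_pair, Submodule.mem_span_singleton] at hv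
  obtain ⟨c, rfl⟩ := hv
  rw [map_smul, ← neg_vsub_eq_vsub_rev q p, map_neg, areaForm_apply_self, neg_zero, smul_zero]

theorem abs_areaForm_eq_sin_angle_mul (x y : E) :
    |ω x y| = sin (angle x y) * (‖x‖ * ‖y‖) := by
  rw [sin_angle_mul_norm_mul_norm, real_inner_self_eq_norm_sq, real_inner_self_eq_norm_sq,
    ← sq, ← o.inner_sq_add_areaForm_sq, add_sub_cancel_left, sqrt_sq_eq_abs]

theorem inner_eq_norm_mul_norm_mul_cos_angle_sub_angle {u v w : E} (hu : u ≠ 0)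
    (h : 0 ≤ ω u v * ω u w) :
    inner ℝ v w = ‖v‖ * ‖w‖ * cos (angle u v - angle u w) := by
  have hu2 : 0 < ‖u‖ ^ 2 := by positivity
  refine mul_left_cancel₀ hu2.ne' ?_
  rw [← o.inner_mul_inner_add_areaForm_mul_areaForm, ← abs_of_nonneg h, abs_mul,
    abs_areaForm_eq_sin_angle_mul, abs_areaForm_eq_sin_angle_mul, ← cos_angle_mul_norm_mul_norm,
    ← cos_angle_mul_norm_mul_norm, cos_sub]
  ring

theorem norm_sub_le_norm_of_areaForm_mul_nonneg {u v w : E} (hvu : ‖v‖ ≤ ‖u‖) (huw : ‖u‖ ≤ ‖w‖)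
    (hv : ‖v - u‖ ≤ ‖u‖) (hw : angle u w ≤ π / 3)
    (h : 0 ≤ ω u v * ω u w) : ‖v - w‖ ≤ ‖w‖ := by
  have hu : u ≠ 0 := by
    rintro rfl
    rw [angle_zero_left] at hw
    linarith [pi_pos]
  have hU : 0 < ‖u‖ := norm_pos_iff.2 hu
  rw [norm_sub_le_norm_iff_sq_le_two_mul_inner,
    o.inner_eq_norm_mul_norm_mul_cos_angle_sub_angle hu h]
  rw [norm_sub_le_norm_iff_sq_le_two_mul_inner, real_inner_comm,
    ← cos_angle_mul_norm_mul_norm] at hv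
  set α := angle u v
  set β := angle u w
  have hβ : 1 / 2 ≤ cos β := cos_pi_div_three ▸
    cos_le_cos_of_nonneg_of_le_pi (angle_nonneg u w) (by linarith [pi_pos]) hw
  rcases le_total α β with hαβ | hβα
  · have hcos : cos β ≤ cos (α - β) := by
      rw [← cos_neg (α - β), neg_sub]
      exact cos_le_cos_of_nonneg_of_le_pi (sub_nonneg.2 hαβ) (angle_le_pi u w)
        (sub_le_self _ (angle_nonneg u v))
    calc ‖v‖ ^ 2 ≤ ‖v‖ * ‖w‖ := by rw [sq]; gcongr; exact hvu.trans huw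
      _ ≤ 2 * (‖v‖ * ‖w‖ * cos β) := by nlinarith [mul_nonneg (norm_nonneg v) (norm_nonneg w)]
      _ ≤ 2 * (‖v‖ * ‖w‖ * cos (α - β)) := by gcongr
  · have hcos : cos α ≤ cos (α - β) :=
      cos_le_cos_of_nonneg_of_le_pi (sub_nonneg.2 hβα) (angle_le_pi u v)
        (sub_le_self _ (angle_nonneg u w))
    have hvα : 0 ≤ ‖v‖ * cos α := by nlinarith [sq_nonneg ‖v‖]
    calc ‖v‖ ^ 2 ≤ 2 * ‖u‖ * (‖v‖ * cos α) := by linarith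
      _ ≤ 2 * ‖w‖ * (‖v‖ * cos α) := by gcongr
      _ ≤ 2 * (‖v‖ * ‖w‖ * cos (α - β)) := by nlinarith [mul_nonneg (norm_nonneg v) (norm_nonneg w)]

end Orientation

open EuclideanGeometry

theorem far_cone_bound_general
    (x y a y' : EuclideanSpace ℝ (Fin 2))
    (hax : dist a x ≤ dist x y) (hay : dist a y ≤ dist x y)
    (hside : (affineSpan ℝ {x, y}).WSameSide a y')
    (hangle' : ∠ y x y' ≤ Real.pi / 3)
    (hlong : dist x y ≤ dist x y') :
    dist y y' ≤ dist x y' ∧ dist a y' ≤ dist x y' := by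
  have : Fact (Module.finrank ℝ (EuclideanSpace ℝ (Fin 2)) = 2) := ⟨finrank_euclideanSpace_fin⟩
  let o : Orientation ℝ (EuclideanSpace ℝ (Fin 2)) (Fin 2) :=
    (EuclideanSpace.basisFun (Fin 2) ℝ).toBasis.orientation
  have hdist : ∀ p q, dist p q = ‖(p -ᵥ x) - (q -ᵥ x)‖ := fun p q => by
    rw [vsub_sub_vsub_cancel_right, dist_eq_norm_vsub]
  have hdist_x : ∀ p, dist x p = ‖p -ᵥ x‖ := fun p => by rw [dist_comm, dist_eq_norm_vsub]
  rw [dist_eq_norm_vsub, hdist_x] at hax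
  rw [hdist, hdist_x] at hay
  rw [hdist_x, hdist_x] at hlong
  rw [hdist, hdist_x, hdist]
  refine ⟨?_, ?_⟩
  · exact o.norm_sub_le_norm_of_areaForm_mul_nonneg le_rfl hlong (by simp) hangle'
      (by rw [o.areaForm_apply_self, zero_mul])
  · exact o.norm_sub_le_norm_of_areaForm_mul_nonneg hax hlong hay hangle'
      (o.areaForm_mul_areaForm_nonneg_of_wSameSide hside)

/-- In the Euclidean plane, let `x, y, a` form a triangle with
`∠ a x y ≤ π/2` whose side `xy` is a longest side, and let `y'` lie in the closed
half-plane bounded by the line through `x` and `y` that contains `a`, with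
`∠ y x y' ≤ π/3` and `‖x − y'‖ ≥ ‖x − y‖`.  Then `‖y − y'‖ ≤ ‖x − y'‖` and
`‖a − y'‖ ≤ ‖x − y'‖`. -/
theorem far_cone_bound
    (x y a y' : EuclideanSpace ℝ (Fin 2))
    (hangle : ∠ a x y ≤ Real.pi / 2)
    (hax : dist a x ≤ dist x y) (hay : dist a y ≤ dist x y)
    (hside : (affineSpan ℝ {x, y}).WSameSide a y')
    (hangle' : ∠ y x y' ≤ Real.pi / 3)
    (hlong : dist x y ≤ dist x y') :
    dist y y' ≤ dist x y' ∧ dist a y' ≤ dist x y' :=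
  far_cone_bound_general x y a y' hax hay hside hangle' hlong
end

section
/- Let x, y be points in a real inner product space with r = ‖x − y‖ > 0, and let a, b be points lying in the intersection of the closed balls of radius r centered at x and at y (i.e. ‖a − x‖ ≤ r, ‖a − y‖ ≤ r, ‖b − x‖ ≤ r, ‖b − y‖ ≤ r) with ‖a − b‖ ≥ r. Then max(∠(a, x, y), ∠(b, x, y)) ≥ π/6. -/
open EuclideanGeometry RealInnerProductSpace

/-- If `r = ‖x − y‖ > 0`, the points `a, b` lie in the intersection of the
closed balls of radius `r` centred at `x` and at `y`, and `‖a − b‖ ≥ r`, then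
`max (∠ a x y) (∠ b x y) ≥ π/6`. -/
theorem angle_max_ge_pi_div_six
    {V : Type*} [NormedAddCommGroup V] [InnerProductSpace ℝ V]
    (x y a b : V) (r : ℝ)
    (hr : r = ‖x - y‖) (hr0 : 0 < r)
    (hax : ‖a - x‖ ≤ r) (hay : ‖a - y‖ ≤ r)
    (hbx : ‖b - x‖ ≤ r) (hby : ‖b - y‖ ≤ r)
    (hab : r ≤ ‖a - b‖) :
    Real.pi / 6 ≤ max (∠ a x y) (∠ b x y) := by
  by_contra hcon
  push_neg at hcon
  rw [max_lt_iff] at hcon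
  obtain ⟨ha, hb⟩ := hcon
  have hπ := Real.pi_pos
  have hangA : ∠ a x y = InnerProductGeometry.angle (a - x) (y - x) := by
    simp [EuclideanGeometry.angle, vsub_eq_sub]
  have hangB : ∠ b x y = InnerProductGeometry.angle (b - x) (y - x) := by
    simp [EuclideanGeometry.angle, vsub_eq_sub]
  rw [hangA] at ha
  rw [hangB] at hb
  have hax0 : a - x ≠ 0 := by
    intro h0
    rw [h0, InnerProductGeometry.angle_zero_left] at ha
    linarith
  have hbx0 : b - x ≠ 0 := by
    intro h0
    rw [h0, InnerProductGeometry.angle_zero_left] at hb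
    linarith
  set u := a - x with hu
  set v := b - x with hv
  set w := y - x with hw
  have hwr : ‖w‖ = r := by rw [hr, hw, norm_sub_rev]
  set α := InnerProductGeometry.angle u w with hα
  set β := InnerProductGeometry.angle v w with hβ
  set c1 := Real.cos α with hc1def
  set c2 := Real.cos β with hc2def
  set s1 := Real.sin α with hs1def
  set s2 := Real.sin β with hs2def
  have hα0 : 0 ≤ α := InnerProductGeometry.angle_nonneg u w
  have hβ0 : 0 ≤ β := InnerProductGeometry.angle_nonneg v w
  have hc1 : Real.sqrt 3 / 2 < c1 := by
    have := Real.cos_lt_cos_of_nonneg_of_le_pi hα0 (by linarith) ha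
    rwa [Real.cos_pi_div_six] at this
  have hc2 : Real.sqrt 3 / 2 < c2 := by
    have := Real.cos_lt_cos_of_nonneg_of_le_pi hβ0 (by linarith) hb
    rwa [Real.cos_pi_div_six] at this
  have hs1 : s1 < 1 / 2 := by
    have := Real.sin_lt_sin_of_lt_of_le_pi_div_two (by linarith) (by linarith) ha
    rwa [Real.sin_pi_div_six] at this
  have hs2 : s2 < 1 / 2 := by
    have := Real.sin_lt_sin_of_lt_of_le_pi_div_two (by linarith) (by linarith) hb
    rwa [Real.sin_pi_div_six] at this
  have hs1' : 0 ≤ s1 := Real.sin_nonneg_of_nonneg_of_le_pi hα0 (InnerProductGeometry.angle_le_pi u w)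
  have hs2' : 0 ≤ s2 := Real.sin_nonneg_of_nonneg_of_le_pi hβ0 (InnerProductGeometry.angle_le_pi v w)
  have hpyth1 : s1 ^ 2 + c1 ^ 2 = 1 := Real.sin_sq_add_cos_sq α
  have hpyth2 : s2 ^ 2 + c2 ^ 2 = 1 := Real.sin_sq_add_cos_sq β
  have hsqrt3 : (Real.sqrt 3) ^ 2 = 3 := Real.sq_sqrt (by norm_num)
  have hsqrt3' : 0 ≤ Real.sqrt 3 := Real.sqrt_nonneg 3
  set nu := ‖u‖ with hnu
  set nv := ‖v‖ with hnv
  have hnu0 : 0 < nu := norm_pos_iff.mpr hax0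
  have hnv0 : 0 < nv := norm_pos_iff.mpr hbx0
  have hq1 : ⟪u, w⟫ = c1 * (nu * r) := by
    rw [← hwr]; exact (InnerProductGeometry.cos_angle_mul_norm_mul_norm u w).symm
  have hq2 : ⟪v, w⟫ = c2 * (nv * r) := by
    rw [← hwr]; exact (InnerProductGeometry.cos_angle_mul_norm_mul_norm v w).symm
  -- orthogonal components (scaled by r^2 to avoid division)
  set u' := (r * r) • u - (c1 * (nu * r)) • w with hu'
  set v' := (r * r) • v - (c2 * (nv * r)) • w with hv'
  have hww : ⟪w, w⟫ = r ^ 2 := by rw [real_inner_self_eq_norm_sq, hwr]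
  have huu : ⟪u, u⟫ = nu ^ 2 := real_inner_self_eq_norm_sq u
  have hvv : ⟪v, v⟫ = nv ^ 2 := real_inner_self_eq_norm_sq v
  have hwu : ⟪w, u⟫ = c1 * (nu * r) := by rw [real_inner_comm]; exact hq1
  have hwv : ⟪w, v⟫ = c2 * (nv * r) := by rw [real_inner_comm]; exact hq2
  have hu'u' : ⟪u', u'⟫ = r ^ 4 * (nu ^ 2 * s1 ^ 2) := by
    simp only [hu', inner_sub_left, inner_sub_right, real_inner_smul_left,
      real_inner_smul_right, huu, hww, hq1, hwu]
    linear_combination (-(r ^ 4 * nu ^ 2)) * hpyth1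
  have hv'v' : ⟪v', v'⟫ = r ^ 4 * (nv ^ 2 * s2 ^ 2) := by
    simp only [hv', inner_sub_left, inner_sub_right, real_inner_smul_left,
      real_inner_smul_right, hvv, hww, hq2, hwv]
    linear_combination (-(r ^ 4 * nv ^ 2)) * hpyth2
  have hu'v' : ⟪u', v'⟫ = r ^ 4 * (⟪u, v⟫ - c1 * c2 * (nu * nv)) := by
    simp only [hu', hv', inner_sub_left, inner_sub_right, real_inner_smul_left,
      real_inner_smul_right, hww, hq1, hq2, hwu, hwv, real_inner_comm v u]
    ring
  have hcs : ⟪u', v'⟫ * ⟪u', v'⟫ ≤ ⟪u', u'⟫ * ⟪v', v'⟫ :=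
    real_inner_mul_inner_self_le u' v'
  rw [hu'u', hv'v', hu'v'] at hcs
  have hr4 : 0 < r ^ 4 := by positivity
  have hcs' : (⟪u, v⟫ - c1 * c2 * (nu * nv)) ^ 2 ≤ nu ^ 2 * s1 ^ 2 * (nv ^ 2 * s2 ^ 2) := by
    have h8 : (0 : ℝ) < r ^ 8 := by positivity
    have h2 : r ^ 8 * ((⟪u, v⟫ - c1 * c2 * (nu * nv)) ^ 2) ≤
        r ^ 8 * (nu ^ 2 * s1 ^ 2 * (nv ^ 2 * s2 ^ 2)) := by
      calc r ^ 8 * ((⟪u, v⟫ - c1 * c2 * (nu * nv)) ^ 2)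
          = r ^ 4 * (⟪u, v⟫ - c1 * c2 * (nu * nv)) * (r ^ 4 * (⟪u, v⟫ - c1 * c2 * (nu * nv))) := by
            ring
        _ ≤ r ^ 4 * (nu ^ 2 * s1 ^ 2) * (r ^ 4 * (nv ^ 2 * s2 ^ 2)) := hcs
        _ = r ^ 8 * (nu ^ 2 * s1 ^ 2 * (nv ^ 2 * s2 ^ 2)) := by ring
    exact le_of_mul_le_mul_left h2 h8
  have hNS0 : 0 ≤ nu * s1 * (nv * s2) :=
    mul_nonneg (mul_nonneg hnu0.le hs1') (mul_nonneg hnv0.le hs2')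
  have hsq : (⟪u, v⟫ - c1 * c2 * (nu * nv)) ^ 2 ≤ (nu * s1 * (nv * s2)) ^ 2 := by
    calc (⟪u, v⟫ - c1 * c2 * (nu * nv)) ^ 2 ≤ nu ^ 2 * s1 ^ 2 * (nv ^ 2 * s2 ^ 2) := hcs'
      _ = (nu * s1 * (nv * s2)) ^ 2 := by ring
  have hlow : -(nu * s1 * (nv * s2)) ≤ ⟪u, v⟫ - c1 * c2 * (nu * nv) :=
    (abs_le_of_sq_le_sq' hsq hNS0).1
  -- distance computation
  have hdist : ‖a - b‖ ^ 2 = nu ^ 2 + nv ^ 2 - 2 * ⟪u, v⟫ := by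
    have h : a - b = u - v := by rw [hu, hv]; abel
    rw [h, norm_sub_sq_real, ← hnu, ← hnv]
    ring
  have habsq : r ^ 2 ≤ ‖a - b‖ ^ 2 := pow_le_pow_left₀ hr0.le hab 2
  rw [hdist] at habsq
  have hsq32 : Real.sqrt 3 / 2 * (Real.sqrt 3 / 2) = 3 / 4 := by
    linear_combination hsqrt3 / 4
  have hc1c2 : 3 / 4 < c1 * c2 := by
    have h1 : Real.sqrt 3 / 2 * (Real.sqrt 3 / 2) < c1 * c2 :=
      mul_lt_mul'' hc1 hc2 (by positivity) (by positivity)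
    linarith
  have hs1s2 : s1 * s2 ≤ 1 / 4 := by
    have h1 : s1 * s2 ≤ 1 / 2 * (1 / 2) := mul_le_mul hs1.le hs2.le hs2' (by norm_num)
    linarith
  have hNSeq : nu * s1 * (nv * s2) = s1 * s2 * (nu * nv) := by ring
  have hstep : (c1 * c2 - s1 * s2) * (nu * nv) ≤ ⟪u, v⟫ := by
    rw [hNSeq] at hlow
    have : c1 * c2 * (nu * nv) - s1 * s2 * (nu * nv) ≤ ⟪u, v⟫ := by linarith
    linarith [this, (by ring : (c1 * c2 - s1 * s2) * (nu * nv)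
      = c1 * c2 * (nu * nv) - s1 * s2 * (nu * nv))]
  have hnunv : 0 < nu * nv := mul_pos hnu0 hnv0
  have hp : 1 / 2 * (nu * nv) < ⟪u, v⟫ := by
    have h2 : 1 / 2 * (nu * nv) < (c1 * c2 - s1 * s2) * (nu * nv) :=
      mul_lt_mul_of_pos_right (by linarith) hnunv
    linarith
  have hA : 0 ≤ (r - nu) * (r + nu - nv) :=
    mul_nonneg (sub_nonneg.mpr hax) (by linarith)
  have hB : 0 ≤ nv * (r - nv) := mul_nonneg hnv0.le (sub_nonneg.mpr hbx)
  have hA' : (r - nu) * (r + nu - nv) = r ^ 2 - r * nv - nu ^ 2 + nu * nv := by ring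
  have hB' : nv * (r - nv) = r * nv - nv ^ 2 := by ring
  have hmax : nu ^ 2 + nv ^ 2 - nu * nv ≤ r ^ 2 := by
    rw [hA'] at hA; rw [hB'] at hB; linarith
  linarith [hp, habsq, hmax]
end

section
/- Let a_n ≤ a_{n−1} ≤ ⋯ ≤ a_1 ≤ b_1 ≤ b_2 ≤ ⋯ ≤ b_n be real numbers and let p ≥ 1. Then for every permutation σ of {1, …, n}, ∑_{i=1}^n (b_i − a_{σ(i)})^p ≤ ∑_{i=1}^n (b_i − a_i)^p. -/
/-!
For a convex `f`, `f b + f c ≤ f a + f d` whenever `b, c` lie between `a` and `d` and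
`b + c = a + d`. If `σ` moves the point `m`, taken largest, and `σ j = m`, `σ m = k`, then
`b j - a m` and `b m - a k` lie between `b j - a k` and `b m - a m` with the same sum, so
re-pairing `j ↦ k`, `m ↦ m` does not decrease the total `p`-th power. This move fixes `m`
and shrinks the support of `σ`, so iterating it reaches the identity.
-/

open Finset Equiv

theorem ConvexOn.map_add_map_le_of_add_eq {𝕜 β : Type*} [Field 𝕜] [LinearOrder 𝕜]
    [IsStrictOrderedRing 𝕜] [AddCommMonoid β] [PartialOrder β] [IsOrderedAddMonoid β]
    [Module 𝕜 β] {s : Set 𝕜} {f : 𝕜 → β} (hf : ConvexOn 𝕜 s f) {a b c d : 𝕜}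
    (ha : a ∈ s) (hd : d ∈ s) (hab : a ≤ b) (hbd : b ≤ d) (hsum : b + c = a + d) :
    f b + f c ≤ f a + f d := by
  rcases hab.eq_or_lt with rfl | hab
  · obtain rfl : c = d := by linarith
    exact le_rfl
  have had : 0 < d - a := by linarith
  -- `b` and `c` are the two convex combinations of `a, d` with swapped weights `u, v`.
  set u := (d - b) / (d - a)
  set v := (b - a) / (d - a)
  have hu : 0 ≤ u := div_nonneg (by linarith) had.le
  have hv : 0 ≤ v := div_nonneg (by linarith) had.le
  have huv : u + v = 1 := by simp only [u, v]; field_simp; ring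
  have hb : u • a + v • d = b := by simp only [smul_eq_mul, u, v]; field_simp; ring
  have hc : v • a + u • d = c := by
    rw [show c = a + d - b by linear_combination hsum]
    simp only [smul_eq_mul, u, v]; field_simp; ring
  calc f b + f c ≤ (u • f a + v • f d) + (v • f a + u • f d) := by
        rw [← hb, ← hc]
        exact add_le_add (hf.2 ha hd hu hv huv) (hf.2 ha hd hv hu (by rw [add_comm, huv]))
    _ = f a + f d := by
        rw [add_add_add_comm, ← add_smul, add_comm (v • f d), ← add_smul, huv, one_smul, one_smul]

theorem Finset.sum_le_sum_of_ne_pair {ι β : Type*} [Fintype ι] [DecidableEq ι]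
    [AddCommMonoid β] [PartialOrder β] [IsOrderedAddMonoid β] {f g : ι → β} {j k : ι}
    (hjk : j ≠ k) (hpair : f j + f k ≤ g j + g k) (heq : ∀ x, x ≠ j → x ≠ k → f x = g x) :
    ∑ x, f x ≤ ∑ x, g x := by
  rw [← sum_compl_add_sum {j, k}, ← sum_compl_add_sum {j, k} g, sum_pair hjk, sum_pair hjk]
  refine add_le_add (le_of_eq (sum_congr rfl fun x hx => heq x ?_ ?_)) hpair <;>
    · rintro rfl; simp at hx

theorem Equiv.Perm.sum_apply_le_sum_diag {ι β : Type*} [Fintype ι] [LinearOrder ι]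
    [AddCommMonoid β] [PartialOrder β] [IsOrderedAddMonoid β] (c : ι → ι → β)
    (hc : ∀ i j k, j < i → k < i → c j i + c i k ≤ c j k + c i i) (σ : Perm ι) :
    ∑ i, c i (σ i) ≤ ∑ i, c i i := by
  induction h : #σ.support using Nat.strong_induction_on generalizing σ with
  | _ N ih =>
  subst h
  rcases eq_or_ne σ 1 with rfl | hσ
  · simp
  have hne : σ.support.Nonempty := nonempty_iff_ne_empty.mpr (support_eq_empty_iff.not.mpr hσ)
  set m := σ.support.max' hne
  have hm : σ m ≠ m := mem_support.mp (σ.support.max'_mem hne)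
  set j := σ⁻¹ m
  have hjm : σ j = m := σ.apply_symm_apply m
  have hjm_ne : j ≠ m := fun h => hm (h ▸ hjm)
  have hj : j < m :=
    lt_of_le_of_ne (σ.support.le_max' j (mem_support.mpr (hjm ▸ hjm_ne.symm))) hjm_ne
  have hk : σ m < m :=
    lt_of_le_of_ne (σ.support.le_max' _ (apply_mem_support.mpr (mem_support.mpr hm))) hm
  set τ := swap m (σ m) * σ
  have hτ_lt : #τ.support < #σ.support := card_support_swap_mul hm
  calc ∑ i, c i (σ i) ≤ ∑ i, c i (τ i) := by
        refine sum_le_sum_of_ne_pair hj.ne ?_ fun x hxj hxm => ?_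
        · simpa [τ, hjm] using hc m j (σ m) hj hk
        · have hσx : σ x ≠ m := fun h => hxj (σ.injective (h.trans hjm.symm))
          rw [Perm.mul_apply, swap_apply_of_ne_of_ne hσx (σ.injective.ne hxm)]
    _ ≤ ∑ i, c i i := ih _ hτ_lt τ rfl

/-- **rearrangement inequality for `p`-th powers.**
Given real numbers `a n ≤ ⋯ ≤ a 1 ≤ b 1 ≤ ⋯ ≤ b n` (encoded by `a` antitone, `b` monotone,
and every `a i` at most every `b j`) and `p ≥ 1`, every bijective pairing `σ` of the `b`'s
with the `a`'s satisfies `∑ i, (b i − a (σ i))^p ≤ ∑ i, (b i − a i)^p`. -/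
theorem rearrangement_rpow
    (n : ℕ) (a b : Fin n → ℝ)
    (ha : Antitone a) (hb : Monotone b) (hab : ∀ i j, a i ≤ b j)
    (p : ℝ) (hp : 1 ≤ p)
    (σ : Equiv.Perm (Fin n)) :
    ∑ i, (b i - a (σ i)) ^ p ≤ ∑ i, (b i - a i) ^ p := by
  refine σ.sum_apply_le_sum_diag (fun i k => (b i - a k) ^ p) fun i j k hj hk => ?_
  exact (convexOn_rpow hp).map_add_map_le_of_add_eq (sub_nonneg.mpr (hab k j))
    (sub_nonneg.mpr (hab i i)) (by linarith [ha hk.le]) (by linarith [hb hj.le]) (by ring)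
end
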